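/- arXiv:2503.13995 — 4 statements merged into one kernel-verified Lean document; each statement's English description precedes it below -/
import Mathlib

section
/- Let D = {diag(π^{−k_1},…,π^{−k_n}) : k ∈ ℤ^n, k_1+…+k_n = 0} ⊆ SL_n(K_v). Let g ∈ GL_n(K_v) be such that g cannot be written as g = a h with a an invertible diagonal matrix over K_v and h ∈ GL_n(K). Then for every bounded open neighborhood W of 0 in K_v^n, every finite subset J of (g R_v^n) ∖ {0}, and every finite subset C of D, there exists a ∈ D ∖ C such that (a J) ∩ W = ∅. -/
noncomputable section

open Polynomial
open scoped Classical

variable (Fq : Type) [Field Fq] [Fintype Fq]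

/-- `K_v = F_q((Y⁻¹))`, realized as the field of Laurent series over `F_q`
in the uniformizer `π_v = Y⁻¹`. -/
abbrev Kv := LaurentSeries Fq

/-- The uniformizer `π_v = Y⁻¹` of `K_v`. -/
def piv : Kv Fq := HahnSeries.single (1 : ℤ) (1 : Fq)

/-- The element `Y = π_v⁻¹ ∈ K_v`. -/
def Yv : Kv Fq := HahnSeries.single (-1 : ℤ) (1 : Fq)

/-- The embedding `R_v = F_q[Y] → K_v`, `f ↦ f(Y)`. -/
def polyEmb : Polynomial Fq →+* Kv Fq := Polynomial.eval₂RingHom HahnSeries.C (Yv Fq)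

/-- `R_v = F_q[Y]`, as a subring of `K_v`. -/
def Rv : Subring (Kv Fq) := (polyEmb Fq).range

/-- `K = F_q(Y)`, the fraction field of `R_v`, as a subfield of `K_v`. -/
def Ksub : Subfield (Kv Fq) := Subfield.closure (Rv Fq : Set (Kv Fq))

/-- The normalized absolute value `|x| = q^{-v(x)}` on `K_v`, where `q = Card F_q`. -/
def absv (x : Kv Fq) : ℝ := if x = 0 then 0 else (Fintype.card Fq : ℝ) ^ (-x.order)

/-- `x ∈ π_v^ℓ O_v`. -/
def inPiPow (ℓ : ℤ) (x : Kv Fq) : Prop := x = 0 ∨ ℓ ≤ x.order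

variable (n : ℕ)

/-- The sup norm `‖x‖ = max_i |x_i|` on `K_v^n`. -/
def vnorm (x : Fin n → Kv Fq) : ℝ := ⨆ i, absv Fq (x i)

/-- The `R_v`-lattice `g R_v^n` in `K_v^n` associated with a matrix `g`. -/
def latticeSet (g : Matrix (Fin n) (Fin n) (Kv Fq)) : Set (Fin n → Kv Fq) :=
  {x | ∃ p : Fin n → Polynomial Fq, x = g.mulVec fun i => polyEmb Fq (p i)}

/-- `R_v^n` as a subset of `K_v^n`. -/
def RvN : Set (Fin n → Kv Fq) := {x | ∀ i, x i ∈ Rv Fq}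

lemma absv_zero : absv Fq 0 = 0 := if_pos rfl

lemma absv_one : absv Fq 1 = 1 := by
  rw [absv, if_neg one_ne_zero, HahnSeries.order_one]
  simp

lemma absv_mul (x y : Kv Fq) : absv Fq (x * y) = absv Fq x * absv Fq y := by
  rcases eq_or_ne x 0 with rfl | hx
  · simp [absv]
  rcases eq_or_ne y 0 with rfl | hy
  · simp [absv]
  have hxy : x * y ≠ 0 := mul_ne_zero hx hy
  have hq : (0 : ℝ) < (Fintype.card Fq : ℝ) := by
    exact_mod_cast Fintype.card_pos
  rw [absv, absv, absv, if_neg hxy, if_neg hx, if_neg hy,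
    HahnSeries.order_mul hx hy, neg_add, zpow_add₀ (ne_of_gt hq)]

/-- The subgroup `D = {diag(π^{-k_1},…,π^{-k_n}) : k ∈ ℤ^n, Σ k_i = 0} ⊆ SL_n(K_v)`,
as a set of matrices. -/
def Dset : Set (Matrix (Fin n) (Fin n) (Kv Fq)) :=
  {A | ∃ k : Fin n → ℤ, (∑ i, k i) = 0 ∧ A = Matrix.diagonal fun i => piv Fq ^ (-(k i))}


lemma absv_pos' {x : Kv Fq} (hx : x ≠ 0) : 0 < absv Fq x := by
  rw [absv, if_neg hx]
  have hq : (0 : ℝ) < (Fintype.card Fq : ℝ) := by exact_mod_cast Fintype.card_pos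
  positivity

lemma absv_pow' (x : Kv Fq) (t : ℕ) : absv Fq (x ^ t) = absv Fq x ^ t := by
  induction t with
  | zero => simp [absv_one]
  | succ t ih => rw [pow_succ, pow_succ, absv_mul, ih]

lemma piv_ne_zero' : piv Fq ≠ 0 := HahnSeries.single_ne_zero one_ne_zero

lemma absv_piv' : absv Fq (piv Fq) = (Fintype.card Fq : ℝ)⁻¹ := by
  rw [absv, if_neg (piv_ne_zero' Fq), piv, HahnSeries.order_single one_ne_zero]
  simp

lemma absv_piv_zpow_neg' (t : ℕ) :
    absv Fq (piv Fq ^ (-(t : ℤ))) = (Fintype.card Fq : ℝ) ^ t := by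
  have hq : (0 : ℝ) < (Fintype.card Fq : ℝ) := by exact_mod_cast Fintype.card_pos
  have h1 : piv Fq ^ (-(t : ℤ)) * piv Fq ^ (t : ℤ) = 1 := by
    rw [← zpow_add₀ (piv_ne_zero' Fq)]; simp
  have h2 : absv Fq (piv Fq ^ (-(t : ℤ))) * absv Fq (piv Fq ^ (t : ℤ)) = 1 := by
    rw [← absv_mul, h1, absv_one]
  have h3 : absv Fq (piv Fq ^ (t : ℤ)) = ((Fintype.card Fq : ℝ) ^ t)⁻¹ := by
    rw [zpow_natCast, absv_pow', absv_piv', inv_pow]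
  rw [h3, mul_inv_eq_one₀ (pow_pos hq t).ne'] at h2
  exact h2

lemma le_vnorm' (m : ℕ) (x : Fin m → Kv Fq) (i : Fin m) :
    absv Fq (x i) ≤ vnorm Fq m x := by
  rw [vnorm]
  exact le_ciSup (f := fun j => absv Fq (x j)) (Set.Finite.bddAbove (Set.finite_range _)) i

/-- **Lemma 3.3 of the paper** (for `K = F_q(Y)`, `v = v_∞`): if `g ∈ GL_n(K_v)` is not
of the form `a h` with `a` diagonal and `h ∈ GL_n(K)`, then for every bounded open
neighborhood `W` of `0`, every finite set `J` of nonzero lattice points of `g R_v^n`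
and every finite subset `C` of `D`, some `a ∈ D ∖ C` satisfies `(a J) ∩ W = ∅`. -/
theorem escape_from_window_lemma (n : ℕ) (hn : 2 ≤ n)
    (g : (Matrix (Fin n) (Fin n) (Kv Fq))ˣ)
    (hirr : ¬ ∃ a h : Matrix (Fin n) (Fin n) (Kv Fq), a.IsDiag ∧ IsUnit a ∧
      IsUnit h ∧ (∀ i j, h i j ∈ Ksub Fq) ∧
      (g : Matrix (Fin n) (Fin n) (Kv Fq)) = a * h)
    (W : Set (Fin n → Kv Fq)) (hWopen : IsOpen W) (hW0 : (0 : Fin n → Kv Fq) ∈ W)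
    (hWbdd : ∃ R : ℝ, ∀ x ∈ W, vnorm Fq n x ≤ R)
    (J : Finset (Fin n → Kv Fq))
    (hJ : ↑J ⊆ latticeSet Fq n ((g : Matrix (Fin n) (Fin n) (Kv Fq))) \ {0})
    (C : Finset (Matrix (Fin n) (Fin n) (Kv Fq))) (hC : ↑C ⊆ Dset Fq n) :
    ∃ a ∈ Dset Fq n, a ∉ C ∧ ∀ x ∈ J, a.mulVec x ∉ W := by
  obtain ⟨R, hR⟩ := hWbdd
  have hq1 : (1 : ℝ) < (Fintype.card Fq : ℝ) := by exact_mod_cast Fintype.one_lt_card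
  by_cases hcase : ∀ i : Fin n, ∃ x ∈ J, ∀ j, j ≠ i → x j = 0
  · -- every coordinate direction contains a lattice point: contradicts `hirr`
    exfalso
    choose X hXJ hX0 using hcase
    have hXlat : ∀ i, X i ∈ latticeSet Fq n (g : Matrix (Fin n) (Fin n) (Kv Fq)) \ {0} :=
      fun i => hJ (Finset.mem_coe.mpr (hXJ i))
    have hXne : ∀ i, X i ≠ 0 := fun i => (hXlat i).2
    choose p hp using fun i => (hXlat i).1
    set P : Matrix (Fin n) (Fin n) (Kv Fq) := fun j i => polyEmb Fq (p i j) with hPdef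
    set c : Fin n → Kv Fq := fun i => X i i with hcdef
    have hcne : ∀ i, c i ≠ 0 := by
      intro i hci
      apply hXne i
      funext j
      by_cases hji : j = i
      · rw [hji]; exact hci
      · exact hX0 i j hji
    have hgP : (g : Matrix (Fin n) (Fin n) (Kv Fq)) * P = Matrix.diagonal c := by
      refine Matrix.ext fun j i => ?_
      rw [Matrix.mul_apply, Matrix.diagonal_apply]
      have hXij : X i j = ∑ l, (g : Matrix (Fin n) (Fin n) (Kv Fq)) j l * polyEmb Fq (p i l) := by
        rw [hp i]; simp [Matrix.mulVec, dotProduct]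
      have hlhs : ∑ l, (g : Matrix (Fin n) (Fin n) (Kv Fq)) j l * P l i = X i j := by
        rw [hXij]
      rw [hlhs]
      by_cases hji : j = i
      · subst hji; simp [hcdef]
      · rw [if_neg hji]; exact hX0 i j hji
    have hdetc : (Matrix.diagonal c).det ≠ 0 := by
      rw [Matrix.det_diagonal]
      exact Finset.prod_ne_zero_iff.mpr fun i _ => hcne i
    have hdetP : P.det ≠ 0 := by
      intro h0
      apply hdetc
      rw [← hgP, Matrix.det_mul, h0, mul_zero]
    have hPmem : ∀ j i, P j i ∈ Ksub Fq := fun j i =>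
      Subfield.subset_closure ⟨p i j, rfl⟩
    set P' : Matrix (Fin n) (Fin n) (Ksub Fq) := fun j i => ⟨P j i, hPmem j i⟩ with hP'def
    have hmap : P'.map (Ksub Fq).subtype = P := by
      ext j i; rfl
    have hdd : P.det = (Ksub Fq).subtype P'.det := by
      rw [← hmap, ← RingHom.mapMatrix_apply, ← RingHom.map_det]
    have hdetP' : P'.det ≠ 0 := by
      intro h0
      apply hdetP
      rw [hdd, h0, map_zero]
    have hdetP'u : IsUnit P'.det := isUnit_iff_ne_zero.mpr hdetP'
    set h : Matrix (Fin n) (Fin n) (Kv Fq) := (P'⁻¹).map (Ksub Fq).subtype with hhdef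
    have hPh : P * h = 1 := by
      rw [← hmap, hhdef, ← Matrix.map_mul, Matrix.mul_nonsing_inv P' hdetP'u]
      exact Matrix.map_one _ (map_zero _) (map_one _)
    have hhP : h * P = 1 := by
      rw [← hmap, hhdef, ← Matrix.map_mul, Matrix.nonsing_inv_mul P' hdetP'u]
      exact Matrix.map_one _ (map_zero _) (map_one _)
    apply hirr
    refine ⟨Matrix.diagonal c, h, Matrix.isDiag_diagonal c, ?_, ?_, ?_, ?_⟩
    · exact (Matrix.isUnit_iff_isUnit_det _).mpr (isUnit_iff_ne_zero.mpr hdetc)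
    · rw [Matrix.isUnit_iff_isUnit_det]
      exact IsUnit.of_mul_eq_one _ (by rw [← Matrix.det_mul, hhP, Matrix.det_one])
    · intro i j
      exact (P'⁻¹ i j).2
    · calc (g : Matrix (Fin n) (Fin n) (Kv Fq))
          = (g : Matrix (Fin n) (Fin n) (Kv Fq)) * (P * h) := by rw [hPh, mul_one]
        _ = ((g : Matrix (Fin n) (Fin n) (Kv Fq)) * P) * h := by rw [mul_assoc]
        _ = Matrix.diagonal c * h := by rw [hgP]
  · -- there is a coordinate `i0` such that every `x ∈ J` is nonzero away from `i0`
    push_neg at hcase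
    obtain ⟨i0, hi0⟩ := hcase
    set k : ℕ → Fin n → ℤ := fun t i => if i = i0 then -((n : ℤ) - 1) * t else t with hk
    have hsum : ∀ t : ℕ, (∑ i, k t i) = 0 := by
      intro t
      have h1 : k t i0 + ∑ i ∈ Finset.univ.erase i0, k t i = ∑ i, k t i :=
        Finset.add_sum_erase _ _ (Finset.mem_univ i0)
      have h2 : ∑ i ∈ Finset.univ.erase i0, k t i = ∑ _i ∈ Finset.univ.erase i0, (t : ℤ) :=
        Finset.sum_congr rfl fun i hi => by
          simp only [hk]; rw [if_neg (Finset.ne_of_mem_erase hi)]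
      have hki0 : k t i0 = -((n : ℤ) - 1) * t := by simp [hk]
      have hcard : ((Finset.univ.erase i0).card : ℤ) = (n : ℤ) - 1 := by
        rw [Finset.card_erase_of_mem (Finset.mem_univ i0), Finset.card_univ, Fintype.card_fin]
        have : 1 ≤ n := le_trans one_le_two hn
        omega
      rw [← h1, h2, Finset.sum_const, nsmul_eq_mul, hcard, hki0]
      ring
    have hj0 : ∃ j0 : Fin n, j0 ≠ i0 := by
      have h0 : ((⟨0, by omega⟩ : Fin n) : Fin n) ≠ ⟨1, by omega⟩ :=
        Fin.ne_of_val_ne (by norm_num)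
      by_cases h : (⟨0, by omega⟩ : Fin n) = i0
      · exact ⟨⟨1, by omega⟩, by rw [← h]; exact (Ne.symm h0)⟩
      · exact ⟨⟨0, by omega⟩, h⟩
    obtain ⟨j0, hj0⟩ := hj0
    have injA : Function.Injective
        (fun t : ℕ => (Matrix.diagonal fun i => piv Fq ^ (-(k t i)) :
          Matrix (Fin n) (Fin n) (Kv Fq))) := by
      have sm : StrictMono fun u : ℕ => (Fintype.card Fq : ℝ) ^ u :=
        fun a b hab => pow_lt_pow_right₀ hq1 hab
      intro s t hst
      have h1 : piv Fq ^ (-(s : ℤ)) = piv Fq ^ (-(t : ℤ)) := by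
        have h2 := congrFun (congrFun hst j0) j0
        simp only [Matrix.diagonal_apply_eq] at h2
        simpa only [hk, if_neg hj0] using h2
      have h3 : (Fintype.card Fq : ℝ) ^ s = (Fintype.card Fq : ℝ) ^ t := by
        rw [← absv_piv_zpow_neg', ← absv_piv_zpow_neg', h1]
      exact sm.injective h3
    have hfin : (Set.Finite ((fun t : ℕ => (Matrix.diagonal fun i => piv Fq ^ (-(k t i)) :
        Matrix (Fin n) (Fin n) (Kv Fq))) ⁻¹' (↑C : Set (Matrix (Fin n) (Fin n) (Kv Fq))))) :=
      Set.Finite.preimage injA.injOn C.finite_toSet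
    have hbig : ∀ x : Fin n → Kv Fq, ∃ t0 : ℕ, x ∈ J → ∀ t : ℕ, t0 ≤ t →
        R < vnorm Fq n ((Matrix.diagonal fun i => piv Fq ^ (-(k t i))).mulVec x) := by
      intro x
      by_cases hxJ : x ∈ J
      · obtain ⟨j, hjne, hjx⟩ := hi0 x hxJ
        have hax : 0 < absv Fq (x j) := absv_pos' Fq hjx
        obtain ⟨t0, ht0⟩ := pow_unbounded_of_one_lt (R / absv Fq (x j)) hq1
        refine ⟨t0, fun _ t ht => ?_⟩
        have h1 : R < (Fintype.card Fq : ℝ) ^ t * absv Fq (x j) :=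
          (div_lt_iff₀ hax).mp (lt_of_lt_of_le ht0 (pow_le_pow_right₀ hq1.le ht))
        have hcoord : ((Matrix.diagonal fun i => piv Fq ^ (-(k t i))).mulVec x) j
            = piv Fq ^ (-(k t j)) * x j := Matrix.mulVec_diagonal _ _ _
        have h2 : absv Fq (((Matrix.diagonal fun i => piv Fq ^ (-(k t i))).mulVec x) j)
            = (Fintype.card Fq : ℝ) ^ t * absv Fq (x j) := by
          rw [hcoord, absv_mul]
          have hkj : k t j = (t : ℤ) := by simp only [hk]; rw [if_neg hjne]
          rw [hkj, absv_piv_zpow_neg']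
        calc R < (Fintype.card Fq : ℝ) ^ t * absv Fq (x j) := h1
          _ = absv Fq (((Matrix.diagonal fun i => piv Fq ^ (-(k t i))).mulVec x) j) := h2.symm
          _ ≤ vnorm Fq n ((Matrix.diagonal fun i => piv Fq ^ (-(k t i))).mulVec x) :=
              le_vnorm' Fq n _ j
      · exact ⟨0, fun hmem => absurd hmem hxJ⟩
    choose f hf using hbig
    obtain ⟨t, htmem, htgt⟩ := hfin.infinite_compl.exists_gt (J.sup f)
    refine ⟨Matrix.diagonal fun i => piv Fq ^ (-(k t i)), ⟨k t, hsum t, rfl⟩, ?_, ?_⟩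
    · intro hmemC
      exact htmem (Set.mem_preimage.mpr (Finset.mem_coe.mpr hmemC))
    · intro x hx hW
      have hle : f x ≤ t := le_trans (Finset.le_sup hx) htgt.le
      exact absurd (hR _ hW) (not_le.mpr (hf x hx t hle))
end
end

section
/- For every integer n ≥ 2 there is a constant C ≥ 0 such that for every integer m ≥ 1, | Card{ k = (k_1,…,k_n) ∈ ℤ^n : k_1 + … + k_n = 0 and 0 ≤ k_i ≤ k_1 + m for all i ∈ {2,…,n} } − m^{n−1}/n! | ≤ C·m^{n−2}. -/
open Finset

private lemma diamond_card_eq_aux (n m : ℕ) (hn : 2 ≤ n) [NeZero n] :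
    Nat.card {k : Fin n → ℤ //
        (∑ i, k i) = 0 ∧ ∀ i, i ≠ 0 → 0 ≤ k i ∧ k i ≤ k 0 + m} =
    ((Finset.piAntidiag (univ : Finset (Fin n)) m).filter
        (fun y : Fin n → ℕ => ∀ i, y i ≤ y 0)).card := by
  rw [← Nat.card_eq_finsetCard]
  apply Nat.card_congr
  have i1 : Fin n := ⟨1, by omega⟩
  have hi1 : (⟨1, by omega⟩ : Fin n) ≠ 0 := by
    intro h; simpa using congrArg Fin.val h
  refine
    { toFun := fun k => ⟨fun i => (k.1 i + if i = 0 then (m:ℤ) else 0).toNat, ?_⟩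
      invFun := fun y => ⟨fun i => (y.1 i : ℤ) - if i = 0 then (m:ℤ) else 0, ?_⟩
      left_inv := ?_
      right_inv := ?_ }
  · obtain ⟨k, hk0, hk⟩ := k
    have h0 : 0 ≤ k 0 + (m:ℤ) := le_trans (hk _ hi1).1 (hk _ hi1).2
    have hnn : ∀ i, 0 ≤ k i + if i = 0 then (m:ℤ) else 0 := by
      intro i
      by_cases h : i = 0
      · subst h; simpa using h0
      · simpa [h] using (hk i h).1
    simp only [mem_filter, mem_piAntidiag]
    refine ⟨⟨?_, fun i _ => mem_univ i⟩, ?_⟩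
    · have : ((∑ i, (k i + if i = 0 then (m:ℤ) else 0).toNat : ℕ) : ℤ) = m := by
        push_cast [Int.toNat_of_nonneg (hnn _)]
        rw [Finset.sum_add_distrib, hk0]
        simp
      exact_mod_cast this
    · intro i
      apply Int.toNat_le_toNat
      by_cases h : i = 0
      · subst h; simp
      · simpa [h] using (hk i h).2
  · obtain ⟨y, hy⟩ := y
    simp only [mem_filter, mem_piAntidiag] at hy
    obtain ⟨⟨hsum, -⟩, hmax⟩ := hy
    have hsum' : (∑ i, (y i : ℤ)) = m := by exact_mod_cast congrArg (Nat.cast : ℕ → ℤ) hsum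
    constructor
    · rw [Finset.sum_sub_distrib, hsum']; simp
    · intro i hi
      refine ⟨by simpa [hi] using (y i).cast_nonneg, ?_⟩
      simp only [hi, if_false, if_pos rfl, sub_zero]
      have := hmax i
      omega
  · rintro ⟨k, hk0, hk⟩
    ext i
    have h0 : 0 ≤ k 0 + (m:ℤ) := le_trans (hk _ hi1).1 (hk _ hi1).2
    by_cases h : i = 0
    · subst h; simp [Int.toNat_of_nonneg h0]
    · simp [h, Int.toNat_of_nonneg (hk i h).1]
  · rintro ⟨y, hy⟩
    ext i
    by_cases h : i = 0 <;> simp [h]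

private lemma diamond_comp_card (n m : ℕ) :
    (Finset.piAntidiag (univ : Finset (Fin n)) m).card = (n + m - 1).choose m := by
  rw [← Finset.map_sym_eq_piAntidiag, Finset.card_map, Finset.sym_univ, Finset.card_univ,
    Sym.card_sym_eq_multichoose, Nat.multichoose_eq, Fintype.card_fin]

private lemma diamond_card_filter_max_eq (n m : ℕ) [NeZero n] (j : Fin n) :
    ((Finset.piAntidiag (univ : Finset (Fin n)) m).filter
        (fun y : Fin n → ℕ => ∀ i, y i ≤ y j)).card =
    ((Finset.piAntidiag (univ : Finset (Fin n)) m).filter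
        (fun y : Fin n → ℕ => ∀ i, y i ≤ y 0)).card := by
  apply Finset.card_nbij' (i := fun y => y ∘ Equiv.swap 0 j) (j := fun y => y ∘ Equiv.swap 0 j)
  · intro y hy
    simp only [mem_coe, mem_filter, mem_piAntidiag] at hy ⊢
    obtain ⟨⟨hs, -⟩, hmax⟩ := hy
    refine ⟨⟨?_, fun i _ => mem_univ i⟩, ?_⟩
    · rw [← hs]; exact Equiv.sum_comp (Equiv.swap 0 j) y
    · intro i
      simpa [Equiv.swap_apply_left] using hmax (Equiv.swap 0 j i)
  · intro y hy
    simp only [mem_coe, mem_filter, mem_piAntidiag] at hy ⊢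
    obtain ⟨⟨hs, -⟩, hmax⟩ := hy
    refine ⟨⟨?_, fun i _ => mem_univ i⟩, ?_⟩
    · rw [← hs]; exact Equiv.sum_comp (Equiv.swap 0 j) y
    · intro i
      simpa [Equiv.swap_apply_right] using hmax (Equiv.swap 0 j i)
  · intro y _; ext i; simp [Equiv.swap_apply_self]
  · intro y _; ext i; simp [Equiv.swap_apply_self]

private lemma diamond_card_tie_le (n m : ℕ) (i j : Fin n) (hij : i ≠ j) :
    ((Finset.piAntidiag (univ : Finset (Fin n)) m).filter
        (fun y : Fin n → ℕ => y i = y j)).card ≤ (m + 1) ^ (n - 2) := by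
  classical
  have hcardsub : Fintype.card {l : Fin n // l ≠ i ∧ l ≠ j} = n - 2 := by
    rw [Fintype.card_subtype]
    have : (univ.filter fun l : Fin n => l ≠ i ∧ l ≠ j) = univ \ {i, j} := by
      ext l; simp [and_comm]
    rw [this, Finset.card_sdiff_of_subset (by simp), Finset.card_univ]
    simp [Finset.card_insert_of_notMem, hij]
  calc ((Finset.piAntidiag (univ : Finset (Fin n)) m).filter
        (fun y : Fin n → ℕ => y i = y j)).card
      ≤ (univ : Finset ({l : Fin n // l ≠ i ∧ l ≠ j} → Fin (m+1))).card := by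
        apply Finset.card_le_card_of_injOn
          (fun y l => ⟨min (y l.1) m, by omega⟩)
        · intro y _; exact mem_univ _
        · intro y hy y' hy' h
          simp only [mem_coe, mem_filter, mem_piAntidiag] at hy hy'
          obtain ⟨⟨hs, -⟩, hmaxy⟩ := hy
          obtain ⟨⟨hs', -⟩, hmaxy'⟩ := hy'
          have hcc : ∀ l (h1 : l ≠ i) (h2 : l ≠ j), y l = y' l := by
            intro l h1 h2
            have hb : y l ≤ m := hs ▸ Finset.single_le_sum (f := y) (fun _ _ => Nat.zero_le _) (mem_univ l)
            have hb' : y' l ≤ m := hs' ▸ Finset.single_le_sum (f := y') (fun _ _ => Nat.zero_le _) (mem_univ l)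
            have := congrArg Fin.val (congrFun h ⟨l, h1, h2⟩)
            simp only [min_eq_left hb, min_eq_left hb'] at this
            exact this
          -- split the sums
          have hsplit : ∀ z : Fin n → ℕ, ∑ l, z l
              = z i + z j + ∑ l ∈ univ.filter (fun l => l ≠ i ∧ l ≠ j), z l := by
            intro z
            rw [← Finset.sum_filter_add_sum_filter_not univ (fun l => l ≠ i ∧ l ≠ j)]
            have : (univ.filter fun l : Fin n => ¬(l ≠ i ∧ l ≠ j)) = {i, j} := by
              ext l; simp; tauto
            rw [this, Finset.sum_insert (by simp [hij]), Finset.sum_singleton]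
            ring
          have hS : ∑ l ∈ univ.filter (fun l => l ≠ i ∧ l ≠ j), y l
              = ∑ l ∈ univ.filter (fun l => l ≠ i ∧ l ≠ j), y' l := by
            apply Finset.sum_congr rfl
            intro l hl
            simp only [mem_filter] at hl
            exact hcc l hl.2.1 hl.2.2
          have e1 := hsplit y
          have e2 := hsplit y'
          rw [hs] at e1; rw [hs'] at e2
          have hyi : y i = y' i := by omega
          funext l
          by_cases h1 : l = i
          · subst h1; exact hyi
          · by_cases h2 : l = j
            · subst h2; omega
            · exact hcc l h1 h2
    _ = (m + 1) ^ (n - 2) := by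
        rw [Finset.card_univ, Fintype.card_fun, Fintype.card_fin, hcardsub]

private lemma diamond_sandwich (n m : ℕ) [NeZero n] :
    (Finset.piAntidiag (univ : Finset (Fin n)) m).card ≤
      n * ((Finset.piAntidiag (univ : Finset (Fin n)) m).filter
        (fun y : Fin n → ℕ => ∀ i, y i ≤ y 0)).card ∧
    n * ((Finset.piAntidiag (univ : Finset (Fin n)) m).filter
        (fun y : Fin n → ℕ => ∀ i, y i ≤ y 0)).card ≤
      (Finset.piAntidiag (univ : Finset (Fin n)) m).card + n * (n^2 * (m+1)^(n-2)) := by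
  classical
  set P := Finset.piAntidiag (univ : Finset (Fin n)) m with hP
  set A : Fin n → Finset (Fin n → ℕ) := fun j => P.filter (fun y => ∀ i, y i ≤ y j) with hA
  set B : Finset (Fin n → ℕ) :=
    P.filter (fun y => ∃ i j, i ≠ j ∧ y i = y j ∧ ∀ l, y l ≤ y i) with hB
  have hsum : ∑ j : Fin n, (A j).card = n * (A 0).card := by
    rw [Finset.sum_congr rfl (fun j _ => diamond_card_filter_max_eq n m j)]
    simp [mul_comm]
    exact Or.inl rfl
  have hswap : ∑ j : Fin n, (A j).card
      = ∑ y ∈ P, (univ.filter fun j : Fin n => ∀ i, y i ≤ y j).card := by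
    simp only [hA, Finset.card_filter]
    rw [Finset.sum_comm]
  constructor
  · -- lower bound
    have hsub : P ⊆ univ.biUnion A := by
      intro y hy
      obtain ⟨j, hj⟩ := Finite.exists_max y
      exact Finset.mem_biUnion.2 ⟨j, mem_univ j, Finset.mem_filter.2 ⟨hy, hj⟩⟩
    calc P.card ≤ (univ.biUnion A).card := Finset.card_le_card hsub
      _ ≤ ∑ j : Fin n, (A j).card := Finset.card_biUnion_le
      _ = n * (A 0).card := hsum
  · -- upper bound
    have hpt : ∀ y ∈ P, (univ.filter fun j : Fin n => ∀ i, y i ≤ y j).card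
        ≤ 1 + (if (∃ i j, i ≠ j ∧ y i = y j ∧ ∀ l, y l ≤ y i) then n else 0) := by
      intro y _
      by_cases hcond : ∃ i j, i ≠ j ∧ y i = y j ∧ ∀ l, y l ≤ y i
      · rw [if_pos hcond]
        calc (univ.filter fun j : Fin n => ∀ i, y i ≤ y j).card
            ≤ (univ : Finset (Fin n)).card := Finset.card_le_card (filter_subset _ _)
          _ = n := by simp
          _ ≤ 1 + n := Nat.le_add_left n 1
      · rw [if_neg hcond]
        apply Nat.le_of_lt_succ
        rw [Nat.lt_succ_iff]
        apply Finset.card_le_one.2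
        intro a ha b hb
        simp only [mem_filter] at ha hb
        by_contra hne
        exact hcond ⟨a, b, hne, le_antisymm (hb.2 a) (ha.2 b), ha.2⟩
    have hBbound : B.card ≤ n^2 * (m+1)^(n-2) := by
      have hsub : B ⊆ ((univ ×ˢ univ).filter fun p : Fin n × Fin n => p.1 ≠ p.2).biUnion
          (fun p => P.filter fun y => y p.1 = y p.2) := by
        intro y hy
        simp only [hB, mem_filter] at hy
        obtain ⟨hyP, i, j, hij, hyij, -⟩ := hy
        exact Finset.mem_biUnion.2 ⟨(i, j), by simp [hij], Finset.mem_filter.2 ⟨hyP, hyij⟩⟩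
      calc B.card ≤ _ := Finset.card_le_card hsub
        _ ≤ ∑ p ∈ ((univ ×ˢ univ).filter fun p : Fin n × Fin n => p.1 ≠ p.2),
              (P.filter fun y => y p.1 = y p.2).card := Finset.card_biUnion_le
        _ ≤ ∑ _p ∈ ((univ ×ˢ univ).filter fun p : Fin n × Fin n => p.1 ≠ p.2),
              (m+1)^(n-2) := by
            apply Finset.sum_le_sum
            intro p hp
            simp only [mem_filter] at hp
            exact diamond_card_tie_le n m p.1 p.2 hp.2
        _ = ((univ ×ˢ univ).filter fun p : Fin n × Fin n => p.1 ≠ p.2).card * (m+1)^(n-2) := by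
            rw [Finset.sum_const, smul_eq_mul]
        _ ≤ n^2 * (m+1)^(n-2) := by
            apply Nat.mul_le_mul_right
            calc _ ≤ ((univ : Finset (Fin n)) ×ˢ univ).card :=
                  Finset.card_le_card (filter_subset _ _)
              _ = n^2 := by simp [sq]
    calc n * (A 0).card = ∑ y ∈ P, (univ.filter fun j : Fin n => ∀ i, y i ≤ y j).card := by
          rw [← hsum, hswap]
      _ ≤ ∑ y ∈ P, (1 + (if (∃ i j, i ≠ j ∧ y i = y j ∧ ∀ l, y l ≤ y i) then n else 0)) :=
          Finset.sum_le_sum hpt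
      _ = P.card + n * B.card := by
          rw [Finset.sum_add_distrib]
          congr 1
          · simp
          · rw [hB, ← Finset.sum_filter, Finset.sum_const, smul_eq_mul, mul_comm]
      _ ≤ P.card + n * (n^2 * (m+1)^(n-2)) := by
          have := hBbound
          exact Nat.add_le_add_left (Nat.mul_le_mul_left n hBbound) _

private lemma diamond_asc_lower (m : ℕ) (hm : 1 ≤ m) : ∀ d : ℕ, m ^ d ≤ (m+1).ascFactorial d
  | 0 => le_refl 1
  | (d+1) => by
      rw [Nat.ascFactorial_succ, pow_succ, mul_comm (m^d) m]
      exact Nat.mul_le_mul (by omega) (diamond_asc_lower m hm d)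

private lemma diamond_asc_upper (m : ℕ) (hm : 1 ≤ m) :
    ∀ d : ℕ, (m+1).ascFactorial (d+1) ≤ m^(d+1) + (2*(d+2))^(d+2) * m^d
  | 0 => by
      rw [Nat.ascFactorial_succ, Nat.ascFactorial_zero]
      norm_num
  | (d+1) => by
      have ih := diamond_asc_upper m hm d
      have key : (m+1).ascFactorial (d+2) = (m+d+2) * (m+1).ascFactorial (d+1) := by
        rw [Nat.ascFactorial_succ]; ring_nf
      rw [key]
      set c : ℕ := (2*(d+2))^(d+2) with hc
      have hc1 : 1 ≤ c := Nat.one_le_pow _ _ (by omega)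
      have hcc : (2*(d+3)) * c ≤ (2*(d+3))^(d+3) := by
        rw [pow_succ, mul_comm]
        exact Nat.mul_le_mul_right _ (Nat.pow_le_pow_left (by omega) _)
      have h1 : m^d ≤ m^(d+1) := Nat.pow_le_pow_right hm (by omega)
      calc (m+d+2) * (m+1).ascFactorial (d+1)
          ≤ (m+d+2) * (m^(d+1) + c * m^d) := Nat.mul_le_mul_left _ ih
        _ = m * m^(d+1) + (d+2) * m^(d+1) + c * (m * m^d) + (d+2) * (c * m^d) := by ring
        _ ≤ m * m^(d+1) + (d+2) * m^(d+1) + c * m^(d+1) + (d+2) * (c * m^(d+1)) := by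
            have h2 : m * m^d ≤ m^(d+1) := by rw [← pow_succ']
            gcongr
        _ = m^(d+2) + ((d+3) * c + (d+2)) * m^(d+1) := by rw [← pow_succ']; ring
        _ ≤ m^(d+2) + (2*(d+3)) * c * m^(d+1) := by
            have : (d+3) * c + (d+2) ≤ (2*(d+3)) * c := by nlinarith
            exact Nat.add_le_add_left (Nat.mul_le_mul_right _ this) _
        _ ≤ m^(d+2) + (2*(d+3))^(d+3) * m^(d+1) := by
            exact Nat.add_le_add_left (Nat.mul_le_mul_right _ hcc) _


/-- **Counting lattice points in the fundamental domain `◊_s`** (Proposition 4.12(2) of the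
paper, with `m = -v(s_*)`): for every `n ≥ 2` there is `C ≥ 0` such that for every `m ≥ 1`,
`|Card{k ∈ ℤ₀^n : 0 ≤ k_i ≤ k_1 + m for 2 ≤ i ≤ n} - m^{n-1}/n!| ≤ C m^{n-2}`. -/
theorem card_diamond_lattice_points (n : ℕ) [NeZero n] (hn : 2 ≤ n) :
    ∃ C : ℝ, 0 ≤ C ∧ ∀ m : ℕ, 1 ≤ m →
      |(Nat.card {k : Fin n → ℤ //
            (∑ i, k i) = 0 ∧ ∀ i, i ≠ 0 → 0 ≤ k i ∧ k i ≤ k 0 + m} : ℝ) -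
          (m : ℝ) ^ (n - 1) / (Nat.factorial n)| ≤ C * (m : ℝ) ^ (n - 2) := by
  obtain ⟨d, rfl⟩ : ∃ d, n = d + 2 := ⟨n - 2, by omega⟩
  refine ⟨((d+1).factorial : ℝ) * (d+2)^3 * 2^d + (2*(d+2))^(d+2), by positivity, ?_⟩
  intro m hm
  have hx : (1:ℝ) ≤ (m:ℝ) := by exact_mod_cast hm
  have hx0 : (0:ℝ) ≤ (m:ℝ) := by linarith
  have e1 : d + 2 + m - 1 = d + m + 1 := by omega
  have e2 : m + (d + 1) = d + m + 1 := by omega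
  have e3 : d + m + 1 - m = d + 1 := by omega
  have e4 : m ≤ d + m + 1 := by omega
  rw [diamond_card_eq_aux (d+2) m (by omega)]
  -- nat quantities
  set N : ℕ := ((Finset.piAntidiag (univ : Finset (Fin (d+2))) m).filter
      (fun y : Fin (d+2) → ℕ => ∀ i, y i ≤ y 0)).card with hN
  set T : ℕ := (Finset.piAntidiag (univ : Finset (Fin (d+2))) m).card with hT
  clear_value N T
  have hsand := diamond_sandwich (d+2) m
  rw [← hN, ← hT] at hsand
  have hfacT : (d+1).factorial * T = (m+1).ascFactorial (d+1) := by
    rw [hT, diamond_comp_card, Nat.ascFactorial_eq_factorial_mul_choose]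
    congr 1
    rw [e1, e2, ← e3, Nat.choose_symm e4]
  -- real versions
  have f1 : (T:ℝ) ≤ (d+2) * N := by exact_mod_cast hsand.1
  have f2 : ((d+2):ℝ) * N ≤ T + (d+2)^3 * ((m:ℝ)+1)^d := by
    have := hsand.2
    have h2 : (d+2) * N ≤ T + (d+2)^3 * (m+1)^d := by
      have hd : d + 2 - 2 = d := rfl
      rw [hd] at this
      calc (d+2) * N ≤ T + (d+2) * ((d+2)^2 * (m+1)^d) := this
        _ = T + (d+2)^3 * (m+1)^d := by ring
    exact_mod_cast h2
  have f3 : (m:ℝ)^(d+1) ≤ ((d+1).factorial : ℝ) * T := by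
    have := diamond_asc_lower m hm (d+1)
    rw [← hfacT] at this
    exact_mod_cast this
  have f4 : ((d+1).factorial : ℝ) * T ≤ (m:ℝ)^(d+1) + (2*((d:ℝ)+2))^(d+2) * (m:ℝ)^d := by
    have := diamond_asc_upper m hm d
    rw [← hfacT] at this
    exact_mod_cast this
  have h5 : ((m:ℝ)+1)^d ≤ 2^d * (m:ℝ)^d := by
    calc ((m:ℝ)+1)^d ≤ (2*(m:ℝ))^d := by
          apply pow_le_pow_left₀ (by linarith) (by linarith)
      _ = 2^d * (m:ℝ)^d := mul_pow 2 (m:ℝ) d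
  -- the key bound on the scaled difference
  set K : ℝ := ((d+1).factorial : ℝ) * (d+2)^3 * 2^d + (2*(d+2))^(d+2) with hK
  have hfac1 : (1:ℝ) ≤ ((d+1).factorial : ℝ) := by exact_mod_cast (d+1).factorial_pos
  have key : |((d:ℝ)+2) * ((d+1).factorial : ℝ) * N - (m:ℝ)^(d+1)| ≤ K * (m:ℝ)^d := by
    rw [abs_le]
    constructor
    · have : (m:ℝ)^(d+1) ≤ ((d:ℝ)+2) * ((d+1).factorial : ℝ) * N := by
        calc (m:ℝ)^(d+1) ≤ ((d+1).factorial : ℝ) * T := f3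
          _ ≤ ((d+1).factorial : ℝ) * ((d+2) * N) := by
              apply mul_le_mul_of_nonneg_left f1 (by positivity)
          _ = ((d:ℝ)+2) * ((d+1).factorial : ℝ) * N := by push_cast; ring
      have hKx : 0 ≤ K * (m:ℝ)^d := by positivity
      linarith
    · calc ((d:ℝ)+2) * ((d+1).factorial : ℝ) * N - (m:ℝ)^(d+1)
          = ((d+1).factorial : ℝ) * (((d+2):ℝ) * N) - (m:ℝ)^(d+1) := by push_cast; ring
        _ ≤ ((d+1).factorial : ℝ) * (T + (d+2)^3 * ((m:ℝ)+1)^d) - (m:ℝ)^(d+1) := by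
            have := mul_le_mul_of_nonneg_left f2 (show (0:ℝ) ≤ ((d+1).factorial : ℝ) by positivity)
            push_cast at this ⊢
            linarith
        _ = ((d+1).factorial : ℝ) * T + ((d+1).factorial : ℝ) * (d+2)^3 * ((m:ℝ)+1)^d
              - (m:ℝ)^(d+1) := by ring
        _ ≤ ((m:ℝ)^(d+1) + (2*((d:ℝ)+2))^(d+2) * (m:ℝ)^d)
              + ((d+1).factorial : ℝ) * (d+2)^3 * (2^d * (m:ℝ)^d) - (m:ℝ)^(d+1) := by
            have h6 : ((d+1).factorial : ℝ) * (d+2)^3 * ((m:ℝ)+1)^d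
                ≤ ((d+1).factorial : ℝ) * (d+2)^3 * (2^d * (m:ℝ)^d) := by
              apply mul_le_mul_of_nonneg_left h5 (by positivity)
            linarith
        _ = K * (m:ℝ)^d := by rw [hK]; ring
  -- conclude
  have hD : (0:ℝ) < ((d:ℝ)+2) * ((d+1).factorial : ℝ) := by positivity
  have hD1 : (1:ℝ) ≤ ((d:ℝ)+2) * ((d+1).factorial : ℝ) := by nlinarith
  have hfac2 : ((d+2).factorial : ℝ) = ((d:ℝ)+2) * ((d+1).factorial : ℝ) := by
    rw [Nat.factorial_succ]; push_cast; ring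
  have hsub1 : d + 2 - 1 = d + 1 := rfl
  have hsub2 : d + 2 - 2 = d := rfl
  rw [hsub1, hsub2, hfac2]
  have hrw : (N:ℝ) - (m:ℝ)^(d+1) / (((d:ℝ)+2) * ((d+1).factorial : ℝ))
      = (((d:ℝ)+2) * ((d+1).factorial : ℝ) * N - (m:ℝ)^(d+1))
        / (((d:ℝ)+2) * ((d+1).factorial : ℝ)) := by
    field_simp
  rw [hrw, abs_div, abs_of_pos hD, div_le_iff₀ hD]
  calc |((d:ℝ)+2) * ((d+1).factorial : ℝ) * N - (m:ℝ)^(d+1)| ≤ K * (m:ℝ)^d := key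
    _ ≤ K * (m:ℝ)^d * (((d:ℝ)+2) * ((d+1).factorial : ℝ)) := by
        nth_rewrite 1 [← mul_one (K * (m:ℝ)^d)]
        apply mul_le_mul_of_nonneg_left hD1 (by positivity)
end

section
/- There exists a constant c₁ ≥ 0 such that for every monic polynomial g ∈ F_q[Y] and every integer m ≥ 1, | Card{ f ∈ F_q[Y] : f monic, f coprime to g, and deg f ≤ deg g − m } − q^{−m}·(q/(q−1))·φ(g) | ≤ c₁·2^{ω(g)}. -/
noncomputable section

open Polynomial
open scoped Classical

variable (Fq : Type) [Field Fq] [Fintype Fq]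

/-- The Euler function of `R_v = F_q[Y]`: `φ(f) = Card (F_q[Y]/(f))ˣ`. -/
def phiP (f : Polynomial Fq) : ℕ := Nat.card (Polynomial Fq ⧸ Ideal.span {f})ˣ

/-- `ω(f)`: the number of distinct monic irreducible factors of `f`. -/
def omegaP (f : Polynomial Fq) : ℕ :=
  (UniqueFactorizationMonoid.normalizedFactors f).toFinset.card

namespace CPCaux

/-- The number of monic polynomials coprime to `g` with degree at most `N`. -/
def Acnt (g : Polynomial Fq) (N : ℤ) : ℕ :=
  Nat.card {f : Polynomial Fq // f.Monic ∧ IsCoprime f g ∧ (f.natDegree : ℤ) ≤ N}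

instance finite_degreeLT (n : ℕ) : Finite (degreeLT Fq n) :=
  Finite.of_equiv _ (degreeLTEquiv Fq n).toEquiv.symm

instance finite_acnt (g : Polynomial Fq) (N : ℤ) :
    Finite {f : Polynomial Fq // f.Monic ∧ IsCoprime f g ∧ (f.natDegree : ℤ) ≤ N} := by
  apply Finite.of_injective (β := degreeLT Fq (N.toNat + 1))
    (fun f => ⟨f.1, by
      rw [mem_degreeLT]
      have h0 : (f : Polynomial Fq) ≠ 0 := f.2.1.ne_zero
      rw [degree_eq_natDegree h0]
      have := f.2.2.2
      exact_mod_cast (by omega : ((f : Polynomial Fq).natDegree : ℤ) < ((N.toNat : ℕ) + 1 : ℕ))⟩)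
  intro a b h
  simp only [Subtype.mk.injEq] at h
  exact Subtype.ext h

lemma Acnt_neg (g : Polynomial Fq) {N : ℤ} (hN : N < 0) : Acnt Fq g N = 0 := by
  rw [Acnt, Nat.card_eq_zero]
  left
  constructor
  rintro ⟨f, -, -, hd⟩
  omega

/-- Split a `Nat.card` along a predicate. -/
lemma card_split {α : Type*} [Finite α] (P : α → Prop) :
    Nat.card α = Nat.card {x : α // P x} + Nat.card {x : α // ¬ P x} := by
  rw [← Nat.card_sum, Nat.card_congr (Equiv.sumCompl P).symm]

/-- Monic polynomials of exact degree `n` are in bijection with `degreeLT n`. -/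
def monicEquiv (n : ℕ) : {f : Polynomial Fq // f.Monic ∧ f.natDegree = n} ≃ degreeLT Fq n where
  toFun f := ⟨f.1 - X ^ n, by
    rw [mem_degreeLT]
    have h0 : (f : Polynomial Fq) ≠ 0 := f.2.1.ne_zero
    have hd : (f : Polynomial Fq).degree = (n : WithBot ℕ) := by
      rw [degree_eq_natDegree h0, f.2.2]
    have := degree_sub_lt (q := (X : Polynomial Fq) ^ n)
      (by rw [hd, degree_X_pow]) h0
      (by rw [f.2.1.leadingCoeff, leadingCoeff_X_pow])
    rwa [hd] at this⟩
  invFun p := ⟨p.1 + X ^ n, by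
    have hlt : (p : Polynomial Fq).degree < (n : WithBot ℕ) := mem_degreeLT.1 p.2
    have hm : ((p : Polynomial Fq) + X ^ n).Monic := by
      rw [add_comm]; exact monic_X_pow_add hlt
    refine ⟨hm, ?_⟩
    have : ((p : Polynomial Fq) + X ^ n).degree = (n : WithBot ℕ) := by
      rw [degree_add_eq_right_of_degree_lt (by rwa [degree_X_pow]), degree_X_pow]
    exact natDegree_eq_of_degree_eq_some this⟩
  left_inv f := Subtype.ext (by simp)
  right_inv p := Subtype.ext (by simp)

lemma card_monic (n : ℕ) :
    Nat.card {f : Polynomial Fq // f.Monic ∧ f.natDegree = n} = Fintype.card Fq ^ n := by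
  rw [Nat.card_congr ((monicEquiv Fq n).trans (degreeLTEquiv Fq n).toEquiv)]
  simp [Nat.card_eq_fintype_card]

lemma Acnt_one (n : ℕ) :
    Acnt Fq 1 (n : ℤ) = ∑ k ∈ Finset.range (n + 1), Fintype.card Fq ^ k := by
  induction n with
  | zero =>
      rw [Finset.sum_range_one, pow_zero, Acnt]
      rw [Nat.card_congr (Equiv.subtypeEquivRight (q := fun f => f.Monic ∧ f.natDegree = 0) ?_)]
      · rw [card_monic, pow_zero]
      · intro f
        constructor
        · rintro ⟨hm, -, hd⟩; exact ⟨hm, by omega⟩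
        · rintro ⟨hm, hd⟩; exact ⟨hm, isCoprime_one_right, by omega⟩
  | succ n ih =>
      rw [Acnt, card_split (P := fun f => f.1.natDegree = n + 1)]
      have e1 := Equiv.subtypeSubtypeEquivSubtypeInter
        (fun f : Polynomial Fq => f.Monic ∧ IsCoprime f 1 ∧ (f.natDegree : ℤ) ≤ ((n+1 : ℕ) : ℤ))
        (fun f => f.natDegree = n + 1)
      have h1 : Nat.card {x : {f : Polynomial Fq // f.Monic ∧ IsCoprime f 1 ∧
          (f.natDegree : ℤ) ≤ ((n+1 : ℕ) : ℤ)} // x.1.natDegree = n + 1}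
          = Fintype.card Fq ^ (n+1) := by
        rw [Nat.card_congr (e1.trans
          (Equiv.subtypeEquivRight (q := fun f => f.Monic ∧ f.natDegree = n + 1) ?_))]
        · exact card_monic Fq (n+1)
        · intro f
          constructor
          · rintro ⟨⟨hm, -, -⟩, hd⟩; exact ⟨hm, hd⟩
          · rintro ⟨hm, hd⟩; exact ⟨⟨hm, isCoprime_one_right, by omega⟩, hd⟩
      have h2 : Nat.card {x : {f : Polynomial Fq // f.Monic ∧ IsCoprime f 1 ∧
          (f.natDegree : ℤ) ≤ ((n+1 : ℕ) : ℤ)} // ¬ x.1.natDegree = n + 1}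
          = Acnt Fq 1 (n : ℤ) := by
        have e2 := Equiv.subtypeSubtypeEquivSubtypeInter
          (fun f : Polynomial Fq => f.Monic ∧ IsCoprime f 1 ∧ (f.natDegree : ℤ) ≤ ((n+1 : ℕ) : ℤ))
          (fun f => ¬ f.natDegree = n + 1)
        rw [Acnt]
        rw [Nat.card_congr (e2.trans
          (Equiv.subtypeEquivRight
            (q := fun f => f.Monic ∧ IsCoprime f 1 ∧ (f.natDegree : ℤ) ≤ (n : ℤ)) ?_))]
        intro f
        constructor
        · rintro ⟨⟨hm, hc, hd⟩, hne⟩; exact ⟨hm, hc, by omega⟩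
        · rintro ⟨hm, hc, hd⟩; exact ⟨⟨hm, hc, by omega⟩, by omega⟩
      rw [h1, h2, ih, Finset.sum_range_succ (n := n+1)]
      ring
lemma Acnt_mul_dvd (p h : Polynomial Fq) (hdvd : p ∣ h) (N : ℤ) :
    Acnt Fq (p * h) N = Acnt Fq h N := by
  apply Nat.card_congr (Equiv.subtypeEquivRight _)
  intro f
  constructor
  · rintro ⟨hm, hc, hd⟩
    exact ⟨hm, hc.of_isCoprime_of_dvd_right (dvd_mul_left h p), hd⟩
  · rintro ⟨hm, hc, hd⟩
    exact ⟨hm, (hc.of_isCoprime_of_dvd_right hdvd).mul_right hc, hd⟩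

lemma Acnt_mul_not_dvd (p h : Polynomial Fq) (hp : Irreducible p) (hpm : p.Monic)
    (hnd : ¬ p ∣ h) (N : ℤ) :
    Acnt Fq h N = Acnt Fq (p * h) N + Acnt Fq h (N - p.natDegree) := by
  have hph : IsCoprime p h := hp.coprime_iff_not_dvd.2 hnd
  rw [Acnt, card_split (P := fun f => ¬ p ∣ f.1)]
  congr 1
  · -- not divisible: coprime to p*h
    have e1 := Equiv.subtypeSubtypeEquivSubtypeInter
      (fun f : Polynomial Fq => f.Monic ∧ IsCoprime f h ∧ (f.natDegree : ℤ) ≤ N)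
      (fun f => ¬ p ∣ f)
    rw [Acnt, Nat.card_congr (e1.trans (Equiv.subtypeEquivRight
      (q := fun f => f.Monic ∧ IsCoprime f (p * h) ∧ (f.natDegree : ℤ) ≤ N) ?_))]
    intro f
    constructor
    · rintro ⟨⟨hm, hc, hd⟩, hndvd⟩
      exact ⟨hm, ((hp.coprime_iff_not_dvd.2 hndvd).symm).mul_right hc, hd⟩
    · rintro ⟨hm, hc, hd⟩
      refine ⟨⟨hm, hc.of_mul_right_right, hd⟩, fun hdvd => hp.not_isUnit ?_⟩
      exact hc.isUnit_of_dvd' hdvd (dvd_mul_right p h)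
  · -- divisible by p: in bijection with monic coprime of degree ≤ N - deg p
    symm
    apply Nat.card_eq_of_bijective
      (f := fun u : {u : Polynomial Fq // u.Monic ∧ IsCoprime u h ∧
          (u.natDegree : ℤ) ≤ N - p.natDegree} =>
        (⟨⟨p * u.1, hpm.mul u.2.1, hph.mul_left u.2.2.1, by
          have h1 : (p * u.1).natDegree = p.natDegree + u.1.natDegree :=
            natDegree_mul hpm.ne_zero u.2.1.ne_zero
          have := u.2.2.2
          omega⟩, by simp⟩ :
        {x : {f : Polynomial Fq // f.Monic ∧ IsCoprime f h ∧ (f.natDegree : ℤ) ≤ N} //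
          ¬ ¬ p ∣ x.1}))
    constructor
    · intro a b hab
      simp only [Subtype.mk.injEq] at hab
      exact Subtype.ext (mul_left_cancel₀ hpm.ne_zero hab)
    · rintro ⟨⟨f, hm, hc, hd⟩, hdvd⟩
      rw [not_not] at hdvd
      obtain ⟨u, rfl⟩ := hdvd
      have hum : u.Monic := hpm.of_mul_monic_left hm
      have h1 : (p * u).natDegree = p.natDegree + u.natDegree :=
        natDegree_mul hpm.ne_zero hum.ne_zero
      refine ⟨⟨u, hum, hc.of_mul_left_right, by omega⟩, ?_⟩
      rfl

lemma omegaP_one : omegaP Fq 1 = 0 := by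
  simp [omegaP, UniqueFactorizationMonoid.normalizedFactors_one]

lemma mem_normalizedFactors_iff_dvd {p h : Polynomial Fq} (hp : Irreducible p)
    (hpm : p.Monic) (h0 : h ≠ 0) :
    p ∈ UniqueFactorizationMonoid.normalizedFactors h ↔ p ∣ h := by
  constructor
  · exact UniqueFactorizationMonoid.dvd_of_mem_normalizedFactors
  · intro hdvd
    obtain ⟨q, hq, hassoc⟩ :=
      UniqueFactorizationMonoid.exists_mem_normalizedFactors_of_dvd h0 hp hdvd
    have : p = q := hassoc.eq_of_normalized hpm.normalize_eq_self
      (UniqueFactorizationMonoid.normalize_normalized_factor q hq)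
    rwa [this]

lemma omegaP_mul (p h : Polynomial Fq) (hp : Irreducible p) (hpm : p.Monic) (h0 : h ≠ 0) :
    omegaP Fq (p * h) = if p ∣ h then omegaP Fq h else omegaP Fq h + 1 := by
  rw [omegaP, UniqueFactorizationMonoid.normalizedFactors_mul hp.ne_zero h0,
    UniqueFactorizationMonoid.normalizedFactors_irreducible hp, hpm.normalize_eq_self,
    Multiset.singleton_add, Multiset.toFinset_cons]
  by_cases hdvd : p ∣ h
  · rw [if_pos hdvd, Finset.card_insert_of_mem, omegaP]
    rw [Multiset.mem_toFinset, mem_normalizedFactors_iff_dvd Fq hp hpm h0]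
    exact hdvd
  · rw [if_neg hdvd, Finset.card_insert_of_notMem, omegaP]
    rw [Multiset.mem_toFinset, mem_normalizedFactors_iff_dvd Fq hp hpm h0]
    exact hdvd

lemma key_aux (n : ℕ) : ∀ g : Polynomial Fq, g.Monic → g.natDegree ≤ n → ∀ N : ℤ,
    |(Acnt Fq g N : ℝ) - (Fintype.card Fq : ℝ) * (Acnt Fq g (N - 1) : ℝ)|
      ≤ 2 ^ omegaP Fq g := by
  induction n with
  | zero =>
      intro g hg hdeg N
      have hg1 : g = 1 := hg.natDegree_eq_zero.1 (by omega)
      subst hg1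
      rw [omegaP_one, pow_zero]
      rcases lt_trichotomy N 0 with hN | hN | hN
      · rw [Acnt_neg Fq 1 hN, Acnt_neg Fq 1 (by omega)]
        simp
      · subst hN
        rw [Acnt_neg Fq 1 (by omega : (0:ℤ) - 1 < 0),
          (by norm_num : (0:ℤ) = ((0:ℕ):ℤ)), Acnt_one]
        simp
      · obtain ⟨k, rfl⟩ : ∃ k : ℕ, N = (k : ℤ) + 1 := ⟨(N - 1).toNat, by omega⟩
        rw [(by push_cast; ring : ((k:ℤ) + 1) = ((k+1:ℕ):ℤ)),
          (by push_cast; ring : ((k+1:ℕ):ℤ) - 1 = ((k:ℕ):ℤ)), Acnt_one, Acnt_one]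
        rw [geom_sum_succ (x := Fintype.card Fq) (n := k + 1)]
        push_cast
        simp
  | succ n ih =>
      intro g hg hdeg N
      by_cases hd0 : g.natDegree = 0
      · have hg1 : g = 1 := hg.natDegree_eq_zero.1 hd0
        subst hg1
        exact ih 1 hg (by omega) N
      -- g has positive degree: extract a monic irreducible factor
      obtain ⟨p, hpm, hpirr, hpdvd⟩ := g.exists_monic_irreducible_factor
        (not_isUnit_of_natDegree_pos g (by omega))
      obtain ⟨h, rfl⟩ := hpdvd
      have hhm : h.Monic := hpm.of_mul_monic_left hg
      have hpd : 1 ≤ p.natDegree := hpirr.natDegree_pos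
      have hdegs : (p * h).natDegree = p.natDegree + h.natDegree :=
        natDegree_mul hpm.ne_zero hhm.ne_zero
      have hhdeg : h.natDegree ≤ n := by omega
      by_cases hdvd : p ∣ h
      · rw [Acnt_mul_dvd Fq p h hdvd, Acnt_mul_dvd Fq p h hdvd,
          omegaP_mul Fq p h hpirr hpm hhm.ne_zero, if_pos hdvd]
        exact ih h hhm hhdeg N
      · have hrec1 := Acnt_mul_not_dvd Fq p h hpirr hpm hdvd N
        have hrec2 := Acnt_mul_not_dvd Fq p h hpirr hpm hdvd (N - 1)
        have e1 : (Acnt Fq (p * h) N : ℝ)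
            = (Acnt Fq h N : ℝ) - (Acnt Fq h (N - p.natDegree) : ℝ) := by
          rw [hrec1]; push_cast; ring
        have e2 : (Acnt Fq (p * h) (N - 1) : ℝ)
            = (Acnt Fq h (N - 1) : ℝ) - (Acnt Fq h (N - 1 - p.natDegree) : ℝ) := by
          rw [hrec2]; push_cast; ring
        rw [omegaP_mul Fq p h hpirr hpm hhm.ne_zero, if_neg hdvd, e1, e2]
        have b1 := ih h hhm hhdeg N
        have b2 := ih h hhm hhdeg (N - p.natDegree)
        have hrw : N - p.natDegree - 1 = N - 1 - p.natDegree := by ring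
        rw [hrw] at b2
        have hre : (Acnt Fq h N : ℝ) - (Acnt Fq h (N - p.natDegree) : ℝ)
              - (Fintype.card Fq : ℝ) * ((Acnt Fq h (N-1) : ℝ) - (Acnt Fq h (N - 1 - p.natDegree) : ℝ))
            = ((Acnt Fq h N : ℝ) - (Fintype.card Fq : ℝ) * (Acnt Fq h (N-1) : ℝ))
              - ((Acnt Fq h (N - p.natDegree) : ℝ)
                - (Fintype.card Fq : ℝ) * (Acnt Fq h (N - 1 - p.natDegree) : ℝ)) := by ring
        rw [hre]
        calc _ ≤ |(Acnt Fq h N : ℝ) - (Fintype.card Fq : ℝ) * (Acnt Fq h (N-1) : ℝ)|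
              + |(Acnt Fq h (N - p.natDegree) : ℝ)
                - (Fintype.card Fq : ℝ) * (Acnt Fq h (N - 1 - p.natDegree) : ℝ)| := abs_sub _ _
          _ ≤ 2 ^ omegaP Fq h + 2 ^ omegaP Fq h := add_le_add b1 b2
          _ = 2 ^ (omegaP Fq h + 1) := by ring

lemma isUnit_mk_iff (g f : Polynomial Fq) :
    IsUnit (Ideal.Quotient.mk (Ideal.span {g}) f) ↔ IsCoprime f g := by
  constructor
  · intro hu
    obtain ⟨b', hb'⟩ := isUnit_iff_exists_inv.1 hu
    obtain ⟨b, rfl⟩ := Ideal.Quotient.mk_surjective b'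
    rw [← map_mul, ← map_one (Ideal.Quotient.mk (Ideal.span {g})), Ideal.Quotient.eq] at hb'
    obtain ⟨c, hc⟩ := Ideal.mem_span_singleton'.1 hb'
    exact ⟨b, -c, by linear_combination -hc⟩
  · rintro ⟨a, b, hab⟩
    apply IsUnit.of_mul_eq_one (Ideal.Quotient.mk (Ideal.span {g}) a)
    have hz : Ideal.Quotient.mk (Ideal.span {g}) g = 0 :=
      Ideal.Quotient.eq_zero_iff_mem.2 (Ideal.mem_span_singleton_self g)
    rw [← map_mul, show f * a = 1 - b * g by linear_combination hab, map_sub, map_one,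
      map_mul, hz, mul_zero, sub_zero]

lemma phiP_one : phiP Fq 1 = 1 := by
  have hs : Subsingleton (Polynomial Fq ⧸ Ideal.span {(1 : Polynomial Fq)}) := by
    rw [Ideal.Quotient.subsingleton_iff, Ideal.span_singleton_one]
  haveI := hs
  rw [phiP, Nat.card_eq_one_iff_unique]
  exact ⟨inferInstance, ⟨1⟩⟩

lemma phiP_eq_card (g : Polynomial Fq) (hg : g.Monic) :
    phiP Fq g = Nat.card {f : Polynomial Fq // f.degree < g.degree ∧ IsCoprime f g} := by
  symm
  apply Nat.card_eq_of_bijective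
    (f := fun f : {f : Polynomial Fq // f.degree < g.degree ∧ IsCoprime f g} =>
      ((isUnit_mk_iff Fq g f.1).2 f.2.2).unit)
  constructor
  · intro a b hab
    have h1 : Ideal.Quotient.mk (Ideal.span {g}) a.1
        = Ideal.Quotient.mk (Ideal.span {g}) b.1 := by
      have := congrArg Units.val hab
      simpa [IsUnit.unit_spec] using this
    rw [Ideal.Quotient.eq, Ideal.mem_span_singleton] at h1
    have h2 : (a.1 - b.1 : Polynomial Fq) = 0 := by
      apply Polynomial.eq_zero_of_dvd_of_degree_lt h1
      exact lt_of_le_of_lt (degree_sub_le _ _) (max_lt a.2.1 b.2.1)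
    exact Subtype.ext (by linear_combination h2)
  · intro u
    obtain ⟨f, hf⟩ := Ideal.Quotient.mk_surjective (u : Polynomial Fq ⧸ Ideal.span {g})
    have hmk : Ideal.Quotient.mk (Ideal.span {g}) (f %ₘ g)
        = Ideal.Quotient.mk (Ideal.span {g}) f := by
      rw [Ideal.Quotient.eq, modByMonic_eq_sub_mul_div f g, Ideal.mem_span_singleton]
      exact ⟨-(f /ₘ g), by ring⟩
    have hdeg : (f %ₘ g).degree < g.degree := degree_modByMonic_lt f hg
    have hunit : IsUnit (Ideal.Quotient.mk (Ideal.span {g}) (f %ₘ g)) := by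
      rw [hmk, hf]; exact u.isUnit
    refine ⟨⟨f %ₘ g, hdeg, (isUnit_mk_iff Fq g _).1 hunit⟩, ?_⟩
    apply Units.ext
    rw [IsUnit.unit_spec, hmk, hf]

lemma card_coprime_lt (g : Polynomial Fq) (hg : g.Monic) (hd : 1 ≤ g.natDegree) :
    Nat.card {f : Polynomial Fq // f.degree < g.degree ∧ IsCoprime f g}
      = (Fintype.card Fq - 1) * Acnt Fq g ((g.natDegree : ℤ) - 1) := by
  have hgne : ¬ IsUnit g := not_isUnit_of_natDegree_pos g (by omega)
  have hdg : g.degree = (g.natDegree : WithBot ℕ) := degree_eq_natDegree hg.ne_zero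
  have e : Fqˣ × {f : Polynomial Fq // f.Monic ∧ IsCoprime f g ∧
      (f.natDegree : ℤ) ≤ (g.natDegree : ℤ) - 1}
      ≃ {f : Polynomial Fq // f.degree < g.degree ∧ IsCoprime f g} := by
    refine Equiv.ofBijective (fun cf =>
      ⟨C (cf.1 : Fq) * cf.2.1, ?_, ?_⟩) ⟨?_, ?_⟩
    · have hc0 : (cf.1 : Fq) ≠ 0 := cf.1.ne_zero
      have : (C (cf.1 : Fq) * cf.2.1).degree = cf.2.1.degree := by
        rw [degree_mul, degree_C hc0, zero_add]
      rw [this, hdg, degree_eq_natDegree cf.2.2.1.ne_zero]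
      have := cf.2.2.2.2
      exact_mod_cast (by omega : (cf.2.1.natDegree : ℤ) < (g.natDegree : ℤ))
    · exact (isCoprime_mul_unit_left_left (cf.1.isUnit.map C) _ _).2 cf.2.2.2.1
    · rintro ⟨c, f, hf⟩ ⟨c', f', hf'⟩ hcc
      simp only [Subtype.mk.injEq] at hcc
      have hlc := congrArg leadingCoeff hcc
      simp only [leadingCoeff_mul, leadingCoeff_C, hf.1.leadingCoeff, hf'.1.leadingCoeff,
        mul_one] at hlc
      have hc : c = c' := Units.ext hlc
      subst hc
      have hC : (C (c : Fq)) ≠ 0 := fun hcz => c.ne_zero (by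
        have := congrArg (fun p : Polynomial Fq => p.coeff 0) hcz
        simpa using this)
      have : f = f' := mul_left_cancel₀ hC hcc
      rw [Prod.mk.injEq]
      exact ⟨rfl, Subtype.ext this⟩
    · rintro ⟨f, hfd, hfc⟩
      have hf0 : f ≠ 0 := by
        rintro rfl
        exact hgne (isCoprime_zero_left.1 hfc)
      have hlc0 : f.leadingCoeff ≠ 0 := leadingCoeff_ne_zero.2 hf0
      refine ⟨⟨Units.mk0 f.leadingCoeff hlc0, ⟨C f.leadingCoeff⁻¹ * f, ?_, ?_, ?_⟩⟩, ?_⟩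
      · rw [mul_comm]; exact monic_mul_leadingCoeff_inv hf0
      · exact (isCoprime_mul_unit_left_left ((Units.mk0 _ (inv_ne_zero hlc0)).isUnit.map C)
          _ _).2 hfc
      · have h1 : (C f.leadingCoeff⁻¹ * f).natDegree = f.natDegree := by
          rw [natDegree_mul (by simpa using inv_ne_zero hlc0) hf0, natDegree_C, zero_add]
        rw [h1]
        have h2 : f.natDegree < g.natDegree := by
          have := hfd
          rw [hdg, degree_eq_natDegree hf0] at this
          exact_mod_cast this
        omega
      · apply Subtype.ext
        simp only [Units.val_mk0]
        rw [← mul_assoc, ← C_mul, mul_inv_cancel₀ hlc0, C_1, one_mul]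
  rw [← Nat.card_congr e, Nat.card_prod, Nat.card_eq_fintype_card, Fintype.card_units, Acnt]

lemma phiP_formula (g : Polynomial Fq) (hg : g.Monic) (hd : 1 ≤ g.natDegree) :
    phiP Fq g = (Fintype.card Fq - 1) * Acnt Fq g ((g.natDegree : ℤ) - 1) := by
  rw [phiP_eq_card Fq g hg, card_coprime_lt Fq g hg hd]

end CPCaux

/-- **Effective coprime counting** (Lemma 2.2 of the paper, for `R_v = F_q[Y]`): there is
`c₁ ≥ 0` such that for every monic `g` and every `m ≥ 1`, the number of monic polynomials
`f` coprime to `g` with `deg f ≤ deg g - m` differs from `q^{-m} (q/(q-1)) φ(g)` by at most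
`c₁ 2^{ω(g)}`. -/
theorem coprime_polynomial_counting :
    ∃ c₁ : ℝ, 0 ≤ c₁ ∧ ∀ g : Polynomial Fq, g.Monic → ∀ m : ℕ, 1 ≤ m →
      |(Nat.card {f : Polynomial Fq // f.Monic ∧ IsCoprime f g ∧
            (f.natDegree : ℤ) ≤ (g.natDegree : ℤ) - (m : ℤ)} : ℝ) -
          (Fintype.card Fq : ℝ) ^ (-(m : ℤ)) *
            ((Fintype.card Fq : ℝ) / ((Fintype.card Fq : ℝ) - 1)) * (phiP Fq g : ℝ)| ≤
        c₁ * 2 ^ (omegaP Fq g) := by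
  refine ⟨1, zero_le_one, ?_⟩
  intro g hg m hm
  set q : ℝ := (Fintype.card Fq : ℝ) with hqdef
  have hq2 : (2 : ℝ) ≤ q := by
    have := Fintype.one_lt_card (α := Fq)
    rw [hqdef]
    exact_mod_cast this
  have hq0 : (0:ℝ) < q := by linarith
  have hq1 : (1:ℝ) < q := by linarith
  have hq1ne : q - 1 ≠ 0 := by intro h; rw [sub_eq_zero] at h; linarith [h.symm]
  by_cases hD : g.natDegree = 0
  · -- g = 1
    have hg1 : g = 1 := hg.natDegree_eq_zero.1 hD
    subst hg1
    have hcard : Nat.card {f : Polynomial Fq // f.Monic ∧ IsCoprime f 1 ∧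
        (f.natDegree : ℤ) ≤ ((1 : Polynomial Fq).natDegree : ℤ) - (m : ℤ)} = 0 := by
      rw [Nat.card_eq_zero]
      left
      constructor
      rintro ⟨f, -, -, hd⟩
      rw [natDegree_one] at hd
      omega
    rw [hcard, CPCaux.phiP_one, CPCaux.omegaP_one]
    simp only [Nat.cast_zero, Nat.cast_one, mul_one, pow_zero, zero_sub, abs_neg]
    rw [abs_of_nonneg (by
      have : (0:ℝ) ≤ q / (q - 1) := div_nonneg (by linarith) (by linarith)
      positivity)]
    have h1 : q ^ (-(m:ℤ)) ≤ q⁻¹ := by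
      rw [← zpow_neg_one]
      exact zpow_le_zpow_right₀ (le_of_lt hq1) (by omega)
    have h2 : q / (q - 1) ≤ 2 := by
      rw [div_le_iff₀ (by linarith)]
      linarith
    calc q ^ (-(m:ℤ)) * (q / (q-1)) ≤ q⁻¹ * 2 :=
          mul_le_mul h1 h2 (div_nonneg (by linarith) (by linarith)) (by positivity)
      _ ≤ 1 := by
          rw [inv_mul_le_iff₀ hq0]
          linarith
  · -- main case : natDegree g ≥ 1
    have hD1 : 1 ≤ g.natDegree := by omega
    have key := CPCaux.key_aux Fq g.natDegree g hg le_rfl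
    set ω : ℕ := omegaP Fq g with hωdef
    set A : ℤ → ℝ := fun N => (CPCaux.Acnt Fq g N : ℝ) with hAdef
    have claim : ∀ k : ℕ,
        |A ((g.natDegree : ℤ) - 1 - k) - q ^ (-(k:ℤ)) * A ((g.natDegree : ℤ) - 1)|
          ≤ 2 ^ ω / (q - 1) := by
      intro k
      induction k with
      | zero =>
          simp only [Nat.cast_zero, neg_zero, zpow_zero, one_mul, sub_zero, sub_self, abs_zero]
          exact div_nonneg (by positivity) (by linarith)
      | succ k ihk =>
          have hkey := key ((g.natDegree : ℤ) - 1 - k)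
          have hstep : (g.natDegree : ℤ) - 1 - k - 1 = (g.natDegree : ℤ) - 1 - (k+1 : ℕ) := by
            push_cast; ring
          rw [hstep] at hkey
          have hzp : q ^ (-((k+1:ℕ):ℤ)) = q⁻¹ * q ^ (-(k:ℤ)) := by
            rw [← zpow_neg_one, ← zpow_add₀ (ne_of_gt hq0)]
            congr 1
            push_cast
            ring
          have e : A ((g.natDegree : ℤ) - 1 - (k+1:ℕ)) - q ^ (-((k+1:ℕ):ℤ)) * A ((g.natDegree : ℤ) - 1)
              = q⁻¹ * (-(A ((g.natDegree : ℤ) - 1 - k) - q * A ((g.natDegree : ℤ) - 1 - (k+1:ℕ)))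
                + (A ((g.natDegree : ℤ) - 1 - k) - q ^ (-(k:ℤ)) * A ((g.natDegree : ℤ) - 1))) := by
            rw [hzp]
            field_simp
            ring
          rw [e, abs_mul, abs_of_nonneg (by positivity : (0:ℝ) ≤ q⁻¹)]
          calc q⁻¹ * |_ + _| ≤ q⁻¹ * (|-(A ((g.natDegree : ℤ) - 1 - k)
                  - q * A ((g.natDegree : ℤ) - 1 - (k+1:ℕ)))|
                + |A ((g.natDegree : ℤ) - 1 - k) - q ^ (-(k:ℤ)) * A ((g.natDegree : ℤ) - 1)|) := by
                apply mul_le_mul_of_nonneg_left (abs_add_le _ _) (by positivity)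
            _ ≤ q⁻¹ * (2 ^ ω + 2 ^ ω / (q - 1)) := by
                apply mul_le_mul_of_nonneg_left _ (by positivity)
                rw [abs_neg]
                exact add_le_add hkey ihk
            _ = q⁻¹ * (2 ^ ω * q / (q - 1)) := by
                congr 1
                field_simp
                ring
            _ = 2 ^ ω / (q - 1) := by
                field_simp
      -- end induction
    obtain ⟨k, rfl⟩ : ∃ k : ℕ, m = k + 1 := ⟨m - 1, by omega⟩
    have hphi : (phiP Fq g : ℝ) = (q - 1) * A ((g.natDegree : ℤ) - 1) := by
      rw [CPCaux.phiP_formula Fq g hg hD1]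
      rw [Nat.cast_mul, Nat.cast_sub Fintype.card_pos]
      simp [hAdef, hqdef]
    show |A ((g.natDegree : ℤ) - ((k+1:ℕ):ℤ)) - q ^ (-((k+1:ℕ):ℤ)) * (q / (q-1)) * (phiP Fq g : ℝ)|
        ≤ 1 * 2 ^ ω
    have harg : (g.natDegree : ℤ) - ((k+1:ℕ):ℤ) = (g.natDegree : ℤ) - 1 - k := by
      push_cast; ring
    have hmain : q ^ (-((k+1:ℕ):ℤ)) * (q / (q-1)) * (phiP Fq g : ℝ)
        = q ^ (-(k:ℤ)) * A ((g.natDegree : ℤ) - 1) := by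
      rw [hphi]
      have hzp : q ^ (-((k+1:ℕ):ℤ)) = q⁻¹ * q ^ (-(k:ℤ)) := by
        rw [← zpow_neg_one, ← zpow_add₀ (ne_of_gt hq0)]
        congr 1
        push_cast
        ring
      rw [hzp]
      field_simp
    rw [harg, hmain, one_mul]
    calc |A ((g.natDegree : ℤ) - 1 - k) - q ^ (-(k:ℤ)) * A ((g.natDegree : ℤ) - 1)|
        ≤ 2 ^ ω / (q - 1) := claim k
      _ ≤ 2 ^ ω := div_le_self (by positivity) (by linarith)
end
end

section
/- There exists a constant c ∈ (0,1] such that for every nonzero polynomial f ∈ F_q[Y], φ(f) ≥ c·q^{deg f}/max{1, ln(deg f)}. -/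
noncomputable section

open Polynomial
open scoped Classical

variable (Fq : Type) [Field Fq] [Fintype Fq]

open UniqueFactorizationMonoid

section Aux

set_option linter.unusedSectionVars false
set_option linter.unusedVariables false

theorem card_quot_aux (f : Polynomial Fq) (hf : f ≠ 0) :
    Nat.card (Polynomial Fq ⧸ Ideal.span {f}) = Fintype.card Fq ^ f.natDegree := by
  have B := (AdjoinRoot.powerBasis hf).basis
  have e : (AdjoinRoot f) ≃ (Fin (AdjoinRoot.powerBasis hf).dim → Fq) := B.equivFun.toEquiv
  have : Nat.card (AdjoinRoot f) = Fintype.card Fq ^ (AdjoinRoot.powerBasis hf).dim := by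
    rw [Nat.card_congr e]
    simp [Nat.card_eq_fintype_card, Fintype.card_fun]
  simpa [AdjoinRoot, AdjoinRoot.powerBasis] using this

theorem dvd_X_pow_card_aux (P : Polynomial Fq) (hP : Irreducible P) :
    P ∣ (X : Polynomial Fq) ^ (Fintype.card Fq ^ P.natDegree) - X := by
  haveI : (Ideal.span {P}).IsMaximal := PrincipalIdealRing.isMaximal_of_irreducible hP
  letI F := Polynomial Fq ⧸ Ideal.span {P}
  letI : Field F := Ideal.Quotient.field _
  haveI : Finite F := by
    have := card_quot_aux Fq P hP.ne_zero
    exact Nat.finite_of_card_ne_zero (this ▸ (pow_pos Fintype.card_pos _).ne')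
  haveI : Fintype F := Fintype.ofFinite F
  have hcard : Fintype.card F = Fintype.card Fq ^ P.natDegree := by
    rw [← Nat.card_eq_fintype_card]; exact card_quot_aux Fq P hP.ne_zero
  have key : (Ideal.Quotient.mk (Ideal.span {P})
      ((X : Polynomial Fq) ^ (Fintype.card Fq ^ P.natDegree) - X)) = 0 := by
    have := FiniteField.pow_card (Ideal.Quotient.mk (Ideal.span {P}) (X : Polynomial Fq))
    rw [hcard] at this
    simp [map_sub, map_pow, this]
  rw [← Ideal.mem_span_singleton]
  exact (Ideal.Quotient.eq_zero_iff_mem).mp key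

theorem phiP_mul_aux (a b : Polynomial Fq) (h : IsCoprime a b) :
    phiP Fq (a * b) = phiP Fq a * phiP Fq b := by
  have hsp : Ideal.span ({a * b} : Set (Polynomial Fq)) =
      Ideal.span {a} * Ideal.span {b} := (Ideal.span_singleton_mul_span_singleton a b).symm
  have hcop : IsCoprime (Ideal.span ({a} : Set (Polynomial Fq))) (Ideal.span {b}) :=
    (Ideal.isCoprime_span_singleton_iff a b).mpr h
  have e : (Polynomial Fq ⧸ Ideal.span {a * b}) ≃+*
      (Polynomial Fq ⧸ Ideal.span {a}) × (Polynomial Fq ⧸ Ideal.span {b}) :=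
    (Ideal.quotEquivOfEq hsp).trans (Ideal.quotientMulEquivQuotientProd _ _ hcop)
  have eu := Units.mapEquiv e.toMulEquiv
  rw [phiP, Nat.card_congr eu.toEquiv, Nat.card_congr MulEquiv.prodUnits.toEquiv,
    Nat.card_prod]
  rfl

theorem isUnit_mk_iff_aux (P : Polynomial Fq) (hP : Irreducible P) (e : ℕ) (he : 1 ≤ e)
    (r : Polynomial Fq) :
    IsUnit (Ideal.Quotient.mk (Ideal.span {P ^ e}) r) ↔ ¬ P ∣ r := by
  constructor
  · rintro ⟨u, hu⟩ hdvd
    obtain ⟨s, hs⟩ := Ideal.Quotient.mk_surjective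
      ((u⁻¹ : (Polynomial Fq ⧸ Ideal.span {P ^ e})ˣ) : Polynomial Fq ⧸ Ideal.span {P ^ e})
    have h1 : r * s - 1 ∈ Ideal.span {P ^ e} := by
      rw [← Ideal.Quotient.eq_zero_iff_mem, map_sub, map_mul, ← hu, hs, Units.mul_inv,
        map_one, sub_self]
    rw [Ideal.mem_span_singleton] at h1
    have : P ∣ r * s - 1 := (dvd_pow_self P (Nat.one_le_iff_ne_zero.mp he)).trans h1
    have : P ∣ 1 := (dvd_sub_right (hdvd.mul_right s)).mp this
    exact hP.not_isUnit (isUnit_of_dvd_one this)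
  · intro hdvd
    have hc : IsCoprime r (P ^ e) := hP.coprime_pow_of_not_dvd e hdvd
    obtain ⟨u, v, huv⟩ := hc
    refine IsUnit.of_mul_eq_one (Ideal.Quotient.mk _ u) ?_
    have : Ideal.Quotient.mk (Ideal.span {P ^ e}) (u * r + v * P ^ e) = 1 := by
      rw [huv, map_one]
    rwa [map_add, map_mul, map_mul, Ideal.Quotient.eq_zero_iff_mem.mpr
      (Ideal.mem_span_singleton_self _), mul_zero, add_zero, mul_comm] at this

theorem phiP_pow_ge_aux (P : Polynomial Fq) (hP : Irreducible P) (e : ℕ) (he : 1 ≤ e) :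
    Fintype.card Fq ^ (e * P.natDegree) ≤
      phiP Fq (P ^ e) + Fintype.card Fq ^ ((e - 1) * P.natDegree) := by
  set Q := Polynomial Fq ⧸ Ideal.span {P ^ e} with hQ
  have hPe : (P : Polynomial Fq) ^ e ≠ 0 := pow_ne_zero _ hP.ne_zero
  have hcardQ : Nat.card Q = Fintype.card Fq ^ (e * P.natDegree) := by
    rw [card_quot_aux Fq _ hPe, natDegree_pow]
  haveI : Finite Q := Nat.finite_of_card_ne_zero (hcardQ ▸ (pow_pos Fintype.card_pos _).ne')
  haveI : Fintype Q := Fintype.ofFinite Q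
  have e1 : Qˣ ≃ {x : Q // IsUnit x} :=
    { toFun := fun u => ⟨u, u.isUnit⟩
      invFun := fun x => x.2.unit
      left_inv := fun u => Units.ext rfl
      right_inv := fun x => Subtype.ext x.2.unit_spec }
  have hU : phiP Fq (P ^ e) = Fintype.card {x : Q // IsUnit x} := by
    rw [phiP, Nat.card_congr e1, Nat.card_eq_fintype_card]
  have hN : Fintype.card {x : Q // ¬ IsUnit x} ≤ Fintype.card Fq ^ ((e - 1) * P.natDegree) := by
    set I : Ideal (Polynomial Fq) := Ideal.span {P ^ (e - 1)} with hI
    have hle : I ≤ Submodule.comap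
        (LinearMap.mulLeft (Polynomial Fq) P) (Ideal.span {P ^ e}) := by
      intro x hx
      rw [hI, Ideal.mem_span_singleton] at hx
      rw [Submodule.mem_comap, LinearMap.mulLeft_apply, Ideal.mem_span_singleton]
      obtain ⟨t, rfl⟩ := hx
      refine ⟨t, ?_⟩
      rw [← mul_assoc, ← pow_succ', Nat.sub_add_cancel he]
    let g := Submodule.mapQ I (Ideal.span {P ^ e}) (LinearMap.mulLeft (Polynomial Fq) P) hle
    have hsurj : ∀ x : Q, ¬ IsUnit x → ∃ y : Polynomial Fq ⧸ I, g y = x := by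
      intro x hx
      obtain ⟨r, rfl⟩ := Ideal.Quotient.mk_surjective x
      have hdvd : P ∣ r := by
        by_contra hnd
        exact hx ((isUnit_mk_iff_aux Fq P hP e he r).mpr hnd)
      obtain ⟨s, rfl⟩ := hdvd
      exact ⟨Submodule.Quotient.mk s, by simp only [g, Submodule.mapQ_apply]; rfl⟩
    have hfin : Nat.card (Polynomial Fq ⧸ I) = Fintype.card Fq ^ ((e - 1) * P.natDegree) := by
      rw [hI, card_quot_aux Fq _ (pow_ne_zero _ hP.ne_zero), natDegree_pow]
    haveI : Finite (Polynomial Fq ⧸ I) :=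
      Nat.finite_of_card_ne_zero (hfin ▸ (pow_pos Fintype.card_pos _).ne')
    haveI : Fintype (Polynomial Fq ⧸ I) := Fintype.ofFinite _
    have : Fintype.card {x : Q // ¬ IsUnit x} ≤ Fintype.card (Polynomial Fq ⧸ I) := by
      rw [Fintype.card_subtype]
      calc (Finset.univ.filter fun x : Q => ¬ IsUnit x).card
          ≤ (Finset.univ.image g).card := by
            apply Finset.card_le_card
            intro x hx
            rw [Finset.mem_filter] at hx
            obtain ⟨y, hy⟩ := hsurj x hx.2
            exact Finset.mem_image.mpr ⟨y, Finset.mem_univ _, hy⟩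
        _ ≤ Finset.univ.card := Finset.card_image_le
        _ = Fintype.card (Polynomial Fq ⧸ I) := Finset.card_univ
    calc Fintype.card {x : Q // ¬ IsUnit x} ≤ Fintype.card (Polynomial Fq ⧸ I) := this
      _ = Fintype.card Fq ^ ((e - 1) * P.natDegree) := by rw [← Nat.card_eq_fintype_card, hfin]
  have hsplit : Fintype.card Q ≤ Fintype.card {x : Q // IsUnit x} +
      Fintype.card {x : Q // ¬ IsUnit x} := by
    rw [Fintype.card_subtype, Fintype.card_subtype,
      Finset.card_filter_add_card_filter_not]
    exact le_of_eq Finset.card_univ.symm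
  rw [← hcardQ, Nat.card_eq_fintype_card]
  calc Fintype.card Q ≤ _ + _ := hsplit
    _ ≤ phiP Fq (P ^ e) + Fintype.card Fq ^ ((e - 1) * P.natDegree) := by
        rw [hU]; exact Nat.add_le_add le_rfl hN

theorem phiP_unit_aux (f : Polynomial Fq) (hf : IsUnit f) : phiP Fq f = 1 := by
  haveI : Subsingleton (Polynomial Fq ⧸ Ideal.span {f}) :=
    Ideal.Quotient.subsingleton_iff.mpr (Ideal.span_singleton_eq_top.mpr hf)
  haveI : Subsingleton (Polynomial Fq ⧸ Ideal.span {f})ˣ :=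
    ⟨fun a b => Units.ext (Subsingleton.elim _ _)⟩
  exact Nat.card_eq_one_iff_unique.mpr ⟨inferInstance, ⟨1⟩⟩

theorem normalizedFactors_of_isUnit_aux (f : Polynomial Fq) (hf : IsUnit f) :
    normalizedFactors f = 0 := by
  by_contra h
  obtain ⟨p, hp⟩ := Multiset.exists_mem_of_ne_zero h
  exact (prime_of_normalized_factor p hp).not_unit
    (isUnit_of_dvd_unit (dvd_of_mem_normalizedFactors hp) hf)

theorem prod_bound_aux : ∀ n : ℕ, ∀ f : Polynomial Fq, f ≠ 0 → f.natDegree ≤ n →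
    (Fintype.card Fq : ℝ) ^ f.natDegree *
      ∏ P ∈ (normalizedFactors f).toFinset,
        (1 - ((Fintype.card Fq : ℝ) ^ P.natDegree)⁻¹) ≤ phiP Fq f := by
  have hq : (1 : ℝ) ≤ (Fintype.card Fq : ℝ) := by exact_mod_cast Fintype.card_pos
  intro n
  induction n using Nat.strong_induction_on with
  | _ n ih =>
    intro f hf hdeg
    by_cases hu : IsUnit f
    · rw [normalizedFactors_of_isUnit_aux Fq f hu, Multiset.toFinset_zero, Finset.prod_empty,
        Polynomial.natDegree_eq_zero_of_isUnit hu, phiP_unit_aux Fq f hu]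
      norm_num
    · obtain ⟨P, hPmem⟩ := exists_mem_normalizedFactors hf hu
      have hPnorm : normalize P = P := normalize_normalized_factor P hPmem
      have hPprime : Prime P := prime_of_normalized_factor P hPmem
      have hPirr : Irreducible P := hPprime.irreducible
      have hfin : FiniteMultiplicity P f := FiniteMultiplicity.of_not_isUnit hPirr.not_isUnit hf
      obtain ⟨c, hc, hPc⟩ := hfin.exists_eq_pow_mul_and_not_dvd
      set k := multiplicity P f with hk
      have hk1 : 1 ≤ k := by
        rw [Nat.one_le_iff_ne_zero, hk, multiplicity_ne_zero]
        exact dvd_of_mem_normalizedFactors hPmem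
      have hc0 : c ≠ 0 := by rintro rfl; rw [mul_zero] at hc; exact hf hc
      have hP0 : P ≠ 0 := hPirr.ne_zero
      have hcop : IsCoprime (P ^ k) c := (hPirr.coprime_pow_of_not_dvd k hPc).symm
      have hdegf : f.natDegree = k * P.natDegree + c.natDegree := by
        rw [hc, natDegree_mul (pow_ne_zero _ hP0) hc0, natDegree_pow]
      have hdP : 1 ≤ P.natDegree := hPirr.natDegree_pos
      have hcltn : c.natDegree < n := by
        have : c.natDegree < f.natDegree := by
          rw [hdegf]; nlinarith [hk1, hdP]
        omega
      have hfactors : (normalizedFactors f).toFinset =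
          insert P (normalizedFactors c).toFinset := by
        rw [hc, normalizedFactors_mul (pow_ne_zero _ hP0) hc0, normalizedFactors_pow,
          normalizedFactors_irreducible hPirr, hPnorm]
        rw [Multiset.toFinset_add]
        congr 1
        rw [Multiset.toFinset_nsmul _ _ (by omega), Multiset.toFinset_singleton,
          Finset.insert_eq]
      have hPnot : P ∉ (normalizedFactors c).toFinset := by
        rw [Multiset.mem_toFinset]
        intro hmem
        exact hPc (dvd_of_mem_normalizedFactors hmem)
      have hrec := ih c.natDegree hcltn c hc0 le_rfl
      have hpow : ((Fintype.card Fq : ℝ)) ^ (k * P.natDegree) *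
          (1 - ((Fintype.card Fq : ℝ) ^ P.natDegree)⁻¹) ≤ phiP Fq (P ^ k) := by
        have h1 := phiP_pow_ge_aux Fq P hPirr k hk1
        have h2 : ((Fintype.card Fq : ℝ)) ^ (k * P.natDegree) ≤
            (phiP Fq (P ^ k) : ℝ) + (Fintype.card Fq : ℝ) ^ ((k - 1) * P.natDegree) := by
          exact_mod_cast h1
        have h3 : ((Fintype.card Fq : ℝ)) ^ ((k-1) * P.natDegree) =
            (Fintype.card Fq : ℝ) ^ (k * P.natDegree) *
              ((Fintype.card Fq : ℝ) ^ P.natDegree)⁻¹ := by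
          rw [← pow_sub₀ _ (by positivity)
            (by nlinarith [hk1, hdP] : P.natDegree ≤ k * P.natDegree)]
          rw [Nat.sub_mul, one_mul]
        rw [h3] at h2
        nlinarith [h2]
      have hphi : (phiP Fq f : ℝ) = (phiP Fq (P ^ k) : ℝ) * (phiP Fq c : ℝ) := by
        rw [hc, phiP_mul_aux Fq _ _ hcop]; push_cast; ring
      rw [hfactors, Finset.prod_insert hPnot, hphi]
      calc (Fintype.card Fq : ℝ) ^ f.natDegree *
            ((1 - ((Fintype.card Fq : ℝ) ^ P.natDegree)⁻¹) *
              ∏ Q ∈ (normalizedFactors c).toFinset,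
                (1 - ((Fintype.card Fq : ℝ) ^ Q.natDegree)⁻¹))
          = ((Fintype.card Fq : ℝ) ^ (k * P.natDegree) *
              (1 - ((Fintype.card Fq : ℝ) ^ P.natDegree)⁻¹)) *
            ((Fintype.card Fq : ℝ) ^ c.natDegree *
              ∏ Q ∈ (normalizedFactors c).toFinset,
                (1 - ((Fintype.card Fq : ℝ) ^ Q.natDegree)⁻¹)) := by
            rw [hdegf, pow_add]; ring
        _ ≤ (phiP Fq (P ^ k) : ℝ) * (phiP Fq c : ℝ) := by
            apply mul_le_mul hpow hrec
            · apply mul_nonneg (by positivity)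
              apply Finset.prod_nonneg
              intro Q hQ
              have h1 : (1:ℝ) ≤ (Fintype.card Fq : ℝ) ^ Q.natDegree := one_le_pow₀ hq
              have h2 : ((Fintype.card Fq : ℝ) ^ Q.natDegree)⁻¹ ≤ 1 := by
                rw [inv_le_one_iff₀]; right; exact h1
              linarith
            · positivity

theorem count_factors_aux (f : Polynomial Fq) (hf : f ≠ 0) (d : ℕ) :
    ((normalizedFactors f).toFinset.filter
      (fun P => P.natDegree = d)).card * d ≤ Fintype.card Fq ^ d := by
  set T := ((normalizedFactors f).toFinset.filter (fun P => P.natDegree = d)) with hT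
  rcases Finset.eq_empty_or_nonempty T with h | ⟨p₀, hp₀⟩
  · rw [h]; simp
  · have hp₀' := Finset.mem_filter.mp hp₀
    have hp₀irr : Irreducible p₀ :=
      (prime_of_normalized_factor p₀ (Multiset.mem_toFinset.mp hp₀'.1)).irreducible
    have hd1 : 1 ≤ d := hp₀'.2 ▸ hp₀irr.natDegree_pos
    have hq2 : 2 ≤ Fintype.card Fq := Fintype.one_lt_card
    have hm2 : 2 ≤ Fintype.card Fq ^ d := le_trans hq2 (Nat.le_self_pow (by omega) _)
    set W : Polynomial Fq := X ^ (Fintype.card Fq ^ d) - X with hW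
    have hWdeg : W.natDegree = Fintype.card Fq ^ d := by
      rw [hW, natDegree_sub_eq_left_of_natDegree_lt, natDegree_X_pow]
      rw [natDegree_X, natDegree_X_pow]; omega
    have hW0 : W ≠ 0 := fun h0 => by
      rw [h0, natDegree_zero] at hWdeg; omega
    have hle : T.val ≤ normalizedFactors W := by
      rw [Multiset.le_iff_count]
      intro p
      by_cases hp : p ∈ T
      · have h1 : T.val.count p = 1 := Multiset.count_eq_one_of_mem T.nodup hp
        rw [h1]
        rw [Multiset.one_le_count_iff_mem]
        have hpf := Finset.mem_filter.mp hp
        have hpmem := Multiset.mem_toFinset.mp hpf.1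
        have hpirr : Irreducible p := (prime_of_normalized_factor p hpmem).irreducible
        have hpdvd : p ∣ W := by
          have := dvd_X_pow_card_aux Fq p hpirr
          rwa [hpf.2] at this
        obtain ⟨q', hq'1, hq'2⟩ := exists_mem_normalizedFactors_of_dvd hW0 hpirr hpdvd
        have : p = q' := by
          rw [← normalize_normalized_factor p hpmem, ← normalize_normalized_factor q' hq'1]
          exact normalize_eq_normalize hq'2.dvd hq'2.symm.dvd
        rwa [this]
      · rw [Multiset.count_eq_zero_of_notMem (fun hm => hp hm)]
        omega
    have hdvd : T.prod id ∣ W := by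
      have h1 : T.prod id = T.val.prod := by
        rw [Finset.prod, Multiset.map_id]
      rw [h1]
      exact (Multiset.prod_dvd_prod_of_le hle).trans (prod_normalizedFactors hW0).dvd
    have hdeg : (T.prod id).natDegree = T.card * d := by
      rw [Polynomial.natDegree_prod (s := T) (f := id) (fun p hp =>
        (prime_of_normalized_factor p (Multiset.mem_toFinset.mp
          (Finset.mem_filter.mp hp).1)).ne_zero)]
      have hconst : ∀ p ∈ T, (id p).natDegree = d := fun p hp => (Finset.mem_filter.mp hp).2
      rw [Finset.sum_congr rfl hconst, Finset.sum_const, smul_eq_mul]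
    calc T.card * d = (T.prod id).natDegree := hdeg.symm
      _ ≤ W.natDegree := Polynomial.natDegree_le_of_dvd hdvd hW0
      _ = Fintype.card Fq ^ d := hWdeg

theorem sum_deg_aux (f : Polynomial Fq) (hf : f ≠ 0) :
    ∑ P ∈ (normalizedFactors f).toFinset, P.natDegree ≤ f.natDegree := by
  have h1 : ∑ P ∈ (normalizedFactors f).toFinset, P.natDegree =
      ((normalizedFactors f).dedup.map Polynomial.natDegree).sum := rfl
  have h2 : ((normalizedFactors f).dedup.map Polynomial.natDegree).sum ≤
      ((normalizedFactors f).map Polynomial.natDegree).sum := by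
    obtain ⟨u, hu⟩ := Multiset.le_iff_exists_add.mp (Multiset.dedup_le (normalizedFactors f))
    conv_rhs => rw [hu]
    rw [Multiset.map_add, Multiset.sum_add]
    exact Nat.le_add_right _ _
  have h3 : ((normalizedFactors f).map Polynomial.natDegree).sum =
      (normalizedFactors f).prod.natDegree :=
    (Polynomial.natDegree_multiset_prod _ (zero_notMem_normalizedFactors f)).symm
  have h4 : (normalizedFactors f).prod.natDegree ≤ f.natDegree := by
    obtain ⟨u, hu⟩ := (prod_normalizedFactors hf)
    have hu0 : (u : Polynomial Fq) ≠ 0 := u.isUnit.ne_zero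
    have hprod0 : (normalizedFactors f).prod ≠ 0 := fun h0 => hf (by
      rw [← hu, h0, zero_mul])
    have h5 : f.natDegree = (normalizedFactors f).prod.natDegree + (u : Polynomial Fq).natDegree := by
      conv_lhs => rw [← hu]
      rw [natDegree_mul hprod0 hu0]
    omega
  omega

theorem geom_helper_aux (n : ℕ) :
    ∑ d ∈ Finset.Icc 1 n, ((2:ℝ)⁻¹) ^ d = 1 - (2:ℝ)⁻¹ ^ n := by
  induction n with
  | zero => simp
  | succ n ih =>
    rw [Finset.sum_Icc_succ_top (by omega), ih]
    ring

theorem exp_factor_aux {t : ℝ} (ht0 : 0 < t) (ht : t ≤ 1/2) :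
    Real.exp (-(t + 2*t^2)) ≤ 1 - t := by
  have h1 : 1 + (t + 2*t^2) ≤ Real.exp (t + 2*t^2) := by
    have := Real.add_one_le_exp (t + 2*t^2); linarith
  rw [Real.exp_neg]
  have h3 : (Real.exp (t + 2*t^2))⁻¹ ≤ (1 + (t + 2*t^2))⁻¹ :=
    inv_anti₀ (by nlinarith) h1
  refine h3.trans ?_
  rw [inv_le_iff_one_le_mul₀ (by nlinarith)]
  nlinarith

theorem analytic_aux {α : Type*} [DecidableEq α] (q n : ℕ) (hq : 2 ≤ q) (hn : 1 ≤ n)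
    (S : Finset α) (D : α → ℕ) (hD1 : ∀ p ∈ S, 1 ≤ D p)
    (hsum : ∑ p ∈ S, D p ≤ n)
    (hcount : ∀ d : ℕ, ((S.filter (fun p => D p = d)).card) * d ≤ q ^ d) :
    Real.exp (-4) / max 1 (Nat.log q n : ℝ) ≤ ∏ p ∈ S, (1 - ((q:ℝ) ^ D p)⁻¹) := by
  set m := Nat.log q n with hm
  have hq1 : (1:ℝ) < (q:ℝ) := by exact_mod_cast hq
  have hq0 : (0:ℝ) < (q:ℝ) := by linarith
  have htpos : ∀ p ∈ S, 0 < ((q:ℝ) ^ D p)⁻¹ := fun p hp => by positivity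
  have hthalf : ∀ p ∈ S, ((q:ℝ) ^ D p)⁻¹ ≤ 1/2 := by
    intro p hp
    have h2q : (2:ℝ) ≤ (q:ℝ) ^ D p := by
      calc (2:ℝ) ≤ (q:ℝ) := by exact_mod_cast hq
        _ ≤ (q:ℝ) ^ D p := le_self_pow₀ (by linarith) (by have := hD1 p hp; omega)
    calc ((q:ℝ) ^ D p)⁻¹ ≤ (2:ℝ)⁻¹ := inv_anti₀ (by norm_num) h2q
      _ = 1/2 := by norm_num
  have hcardR : ∀ d : ℕ, 1 ≤ d →
      ((S.filter (fun p => D p = d)).card : ℝ) * ((q:ℝ) ^ d)⁻¹ ≤ 1 / d := by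
    intro d hd
    rw [div_eq_mul_inv, one_mul]
    have h1 : ((S.filter (fun p => D p = d)).card : ℝ) * d ≤ (q:ℝ) ^ d := by
      exact_mod_cast hcount d
    have hdpos : (0:ℝ) < d := by exact_mod_cast hd
    rw [mul_inv_le_iff₀ (by positivity)]
    rw [inv_mul_eq_div, le_div_iff₀ hdpos] at *
    nlinarith [h1]
  have hDn : ∀ p ∈ S, D p ≤ n := by
    intro p hp
    exact le_trans (Finset.single_le_sum (fun i _ => Nat.zero_le (D i)) hp) hsum
  have hsmall : ∑ p ∈ S.filter (fun p => D p ≤ m), ((q:ℝ) ^ D p)⁻¹ ≤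
      1 + Real.log (max 1 (m:ℝ)) := by
    have hmaps : ∀ p ∈ S.filter (fun p => D p ≤ m), D p ∈ Finset.Icc 1 m := by
      intro p hp
      have hp' := Finset.mem_filter.mp hp
      exact Finset.mem_Icc.mpr ⟨hD1 p hp'.1, hp'.2⟩
    calc ∑ p ∈ S.filter (fun p => D p ≤ m), ((q:ℝ) ^ D p)⁻¹
        = ∑ d ∈ Finset.Icc 1 m, ∑ p ∈ (S.filter (fun p => D p ≤ m)).filter
            (fun p => D p = d), ((q:ℝ) ^ D p)⁻¹ :=
          (Finset.sum_fiberwise_of_maps_to hmaps _).symm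
      _ ≤ ∑ d ∈ Finset.Icc 1 m, (1 / d : ℝ) := by
          apply Finset.sum_le_sum
          intro d hd
          have hd1 : 1 ≤ d := (Finset.mem_Icc.mp hd).1
          have : ∑ p ∈ (S.filter (fun p => D p ≤ m)).filter (fun p => D p = d),
              ((q:ℝ) ^ D p)⁻¹ =
              ((S.filter (fun p => D p ≤ m)).filter (fun p => D p = d)).card *
                ((q:ℝ) ^ d)⁻¹ := by
            rw [Finset.sum_congr rfl (fun p hp => by
              rw [(Finset.mem_filter.mp hp).2]), Finset.sum_const, nsmul_eq_mul]
          rw [this]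
          refine le_trans ?_ (hcardR d hd1)
          apply mul_le_mul_of_nonneg_right _ (by positivity)
          have hsub : (S.filter (fun p => D p ≤ m)).filter (fun p => D p = d) ⊆
              S.filter (fun p => D p = d) := by
            intro p hp
            have h1 := Finset.mem_filter.mp hp
            have h2 := Finset.mem_filter.mp h1.1
            exact Finset.mem_filter.mpr ⟨h2.1, h1.2⟩
          exact_mod_cast Finset.card_le_card hsub
      _ ≤ 1 + Real.log (max 1 (m:ℝ)) := by
          have h1 : ∑ d ∈ Finset.Icc 1 m, (1 / d : ℝ) = harmonic m := by
            rw [harmonic_eq_sum_Icc]; push_cast; simp [one_div]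
          rw [h1]
          refine le_trans (harmonic_le_one_add_log m) ?_
          have : Real.log (m:ℝ) ≤ Real.log (max 1 (m:ℝ)) := by
            rcases Nat.eq_zero_or_pos m with h | h
            · simp [h]
            · have : (1:ℝ) ≤ (m:ℝ) := by exact_mod_cast h
              rw [max_eq_right this]
          linarith
  have htail : ∑ p ∈ S.filter (fun p => ¬ D p ≤ m), ((q:ℝ) ^ D p)⁻¹ ≤ 1 := by
    set Sg := S.filter (fun p => ¬ D p ≤ m) with hSg
    have hcard : (m + 1) * Sg.card ≤ n := by
      calc (m+1) * Sg.card = Sg.card * (m+1) := by ring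
        _ ≤ ∑ p ∈ Sg, D p := by
            have h := Finset.card_nsmul_le_sum Sg D (m+1) (fun p hp => by
              have := (Finset.mem_filter.mp hp).2; omega)
            simpa [smul_eq_mul] using h
        _ ≤ ∑ p ∈ S, D p := Finset.sum_le_sum_of_subset (Finset.filter_subset _ _)
        _ ≤ n := hsum
    have hqm : (n:ℝ) < (q:ℝ) ^ (m+1) := by
      exact_mod_cast Nat.lt_pow_succ_log_self (by omega) n
    have hterm : ∀ p ∈ Sg, ((q:ℝ) ^ D p)⁻¹ ≤ ((q:ℝ) ^ (m+1))⁻¹ := by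
      intro p hp
      have hDp : m + 1 ≤ D p := by
        have := (Finset.mem_filter.mp hp).2; omega
      apply inv_anti₀ (by positivity)
      exact pow_le_pow_right₀ (by linarith) hDp
    calc ∑ p ∈ Sg, ((q:ℝ) ^ D p)⁻¹ ≤ ∑ p ∈ Sg, ((q:ℝ) ^ (m+1))⁻¹ :=
          Finset.sum_le_sum hterm
      _ = Sg.card * ((q:ℝ) ^ (m+1))⁻¹ := by rw [Finset.sum_const, nsmul_eq_mul]
      _ ≤ 1 := by
          rw [mul_inv_le_iff₀ (by positivity), one_mul]
          calc (Sg.card : ℝ) ≤ (m+1) * Sg.card := by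
                have h1 : (1:ℝ) ≤ (m:ℝ) + 1 := by
                  have := Nat.cast_nonneg (α := ℝ) m; linarith
                nlinarith [Nat.cast_nonneg (α := ℝ) Sg.card]
            _ ≤ (n:ℝ) := by exact_mod_cast hcard
            _ ≤ (q:ℝ) ^ (m+1) := hqm.le
  have hquad : ∑ p ∈ S, (((q:ℝ) ^ D p)⁻¹)^2 ≤ 1 := by
    have hmaps : ∀ p ∈ S, D p ∈ Finset.Icc 1 n := fun p hp =>
      Finset.mem_Icc.mpr ⟨hD1 p hp, hDn p hp⟩
    calc ∑ p ∈ S, (((q:ℝ) ^ D p)⁻¹)^2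
        = ∑ d ∈ Finset.Icc 1 n, ∑ p ∈ S.filter (fun p => D p = d),
            (((q:ℝ) ^ D p)⁻¹)^2 := (Finset.sum_fiberwise_of_maps_to hmaps _).symm
      _ ≤ ∑ d ∈ Finset.Icc 1 n, ((2:ℝ)⁻¹) ^ d := by
          apply Finset.sum_le_sum
          intro d hd
          have hd1 : 1 ≤ d := (Finset.mem_Icc.mp hd).1
          have heq : ∑ p ∈ S.filter (fun p => D p = d), (((q:ℝ) ^ D p)⁻¹)^2 =
              (S.filter (fun p => D p = d)).card * (((q:ℝ) ^ d)⁻¹)^2 := by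
            rw [Finset.sum_congr rfl (fun p hp => by
              rw [(Finset.mem_filter.mp hp).2]), Finset.sum_const, nsmul_eq_mul]
          rw [heq]
          have h1 : ((S.filter (fun p => D p = d)).card : ℝ) * ((q:ℝ) ^ d)⁻¹ ≤ 1 := by
            refine le_trans (hcardR d hd1) ?_
            rw [div_le_one (by exact_mod_cast hd1)]
            exact_mod_cast hd1
          have h2 : ((q:ℝ) ^ d)⁻¹ ≤ ((2:ℝ)⁻¹) ^ d := by
            rw [← inv_pow]
            apply pow_le_pow_left₀ (by positivity)
            apply inv_anti₀ (by norm_num)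
            exact_mod_cast hq
          calc ((S.filter (fun p => D p = d)).card : ℝ) * (((q:ℝ) ^ d)⁻¹)^2
              = (((S.filter (fun p => D p = d)).card : ℝ) * ((q:ℝ) ^ d)⁻¹) *
                ((q:ℝ) ^ d)⁻¹ := by ring
            _ ≤ 1 * ((2:ℝ)⁻¹) ^ d := by
                apply mul_le_mul h1 h2 (by positivity)
                norm_num
            _ = ((2:ℝ)⁻¹) ^ d := one_mul _
      _ ≤ 1 := by
          rw [geom_helper_aux]
          have : (0:ℝ) ≤ (2:ℝ)⁻¹ ^ n := by positivity
          linarith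
  have hsum_total : ∑ p ∈ S, (((q:ℝ) ^ D p)⁻¹ + 2 * (((q:ℝ) ^ D p)⁻¹)^2) ≤
      4 + Real.log (max 1 (m:ℝ)) := by
    rw [Finset.sum_add_distrib]
    have h1 : ∑ p ∈ S, ((q:ℝ) ^ D p)⁻¹ ≤ 2 + Real.log (max 1 (m:ℝ)) := by
      rw [← Finset.sum_filter_add_sum_filter_not S (fun p => D p ≤ m)]
      linarith [hsmall, htail]
    have h2 : ∑ p ∈ S, 2 * (((q:ℝ) ^ D p)⁻¹)^2 ≤ 2 := by
      rw [← Finset.mul_sum]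
      linarith [hquad]
    linarith
  have hprod : Real.exp (-(4 + Real.log (max 1 (m:ℝ)))) ≤
      ∏ p ∈ S, (1 - ((q:ℝ) ^ D p)⁻¹) := by
    calc Real.exp (-(4 + Real.log (max 1 (m:ℝ))))
        ≤ Real.exp (-(∑ p ∈ S, (((q:ℝ) ^ D p)⁻¹ + 2 * (((q:ℝ) ^ D p)⁻¹)^2))) := by
          apply Real.exp_le_exp.mpr
          linarith [hsum_total]
      _ = ∏ p ∈ S, Real.exp (-(((q:ℝ) ^ D p)⁻¹ + 2 * (((q:ℝ) ^ D p)⁻¹)^2)) := by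
          rw [← Real.exp_sum, ← Finset.sum_neg_distrib]
      _ ≤ ∏ p ∈ S, (1 - ((q:ℝ) ^ D p)⁻¹) := by
          apply Finset.prod_le_prod
          · intro p hp; positivity
          · intro p hp
            exact exp_factor_aux (htpos p hp) (hthalf p hp)
  refine le_trans (le_of_eq ?_) hprod
  rw [neg_add, Real.exp_add, Real.exp_neg (Real.log _),
    Real.exp_log (by positivity : (0:ℝ) < max 1 (m:ℝ)), div_eq_mul_inv]

end Aux

/-- **Lower bound for the Euler function** (Equation (2.3) of the paper, for
`R_v = F_q[Y]`): there is `c ∈ (0,1]` with `φ(f) ≥ c q^{deg f}/max{1, ln(deg f)}`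
for every nonzero `f`. -/
theorem euler_phi_lower_bound :
    ∃ c : ℝ, 0 < c ∧ c ≤ 1 ∧ ∀ f : Polynomial Fq, f ≠ 0 →
      c * (Fintype.card Fq : ℝ) ^ f.natDegree / max 1 (Real.log f.natDegree) ≤
        (phiP Fq f : ℝ) := by
  have hexp1 : Real.exp (-4) ≤ 1 := Real.exp_le_one_iff.mpr (by norm_num)
  have hexp0 : 0 < Real.exp (-4) := Real.exp_pos _
  refine ⟨Real.exp (-4) / 2, by positivity, by linarith, ?_⟩
  intro f hf
  set q := Fintype.card Fq with hqdef
  have hq2 : 2 ≤ q := Fintype.one_lt_card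
  have hq0 : (0:ℝ) < (q:ℝ) := by positivity
  by_cases hn0 : f.natDegree = 0
  · have hu : IsUnit f := by
      rw [Polynomial.isUnit_iff]
      refine ⟨f.coeff 0, isUnit_iff_ne_zero.mpr ?_, (Polynomial.eq_C_of_natDegree_eq_zero hn0).symm⟩
      intro h0
      apply hf
      rw [Polynomial.eq_C_of_natDegree_eq_zero hn0, h0, map_zero]
    rw [phiP_unit_aux Fq f hu, hn0]
    simp only [pow_zero, mul_one, Nat.cast_zero, Real.log_zero, Nat.cast_one]
    rw [max_eq_left (by norm_num)]
    norm_num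
    linarith
  · have hn1 : 1 ≤ f.natDegree := by omega
    set n := f.natDegree with hndef
    have key := prod_bound_aux Fq n f hf le_rfl
    have hana := analytic_aux q n hq2 hn1 (normalizedFactors f).toFinset
      (fun P => P.natDegree)
      (fun P hP => (prime_of_normalized_factor P
        (Multiset.mem_toFinset.mp hP)).irreducible.natDegree_pos)
      (sum_deg_aux Fq f hf)
      (count_factors_aux Fq f hf)
    -- compare max terms
    set m := Nat.log q n with hmdef
    have hlog2 : (1:ℝ)/2 < Real.log 2 := by
      have := Real.log_two_gt_d9; linarith
    have hmn : (m:ℝ) * Real.log 2 ≤ Real.log n := by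
      have h1 : (q:ℝ) ^ m ≤ (n:ℝ) := by
        exact_mod_cast Nat.pow_log_le_self q (by omega)
      have h2 : Real.log ((q:ℝ) ^ m) ≤ Real.log n :=
        Real.log_le_log (by positivity) h1
      rw [Real.log_pow] at h2
      have h3 : Real.log 2 ≤ Real.log q :=
        Real.log_le_log (by norm_num) (by exact_mod_cast hq2)
      nlinarith [Nat.cast_nonneg (α := ℝ) m]
    have hmax : max 1 (m:ℝ) ≤ 2 * max 1 (Real.log n) := by
      apply max_le
      · have : (1:ℝ) ≤ max 1 (Real.log n) := le_max_left _ _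
        linarith
      · have h1 : (m:ℝ) ≤ 2 * Real.log n := by nlinarith [hmn, hlog2]
        have h2 : Real.log n ≤ max 1 (Real.log n) := le_max_right _ _
        linarith
    -- chain
    have hchain1 : Real.exp (-4) / 2 / max 1 (Real.log n) ≤
        Real.exp (-4) / max 1 (m:ℝ) := by
      rw [div_div, div_le_div_iff₀ (by positivity) (by positivity)]
      have h1 : max 1 (m:ℝ) ≤ 2 * max 1 (Real.log n) := hmax
      nlinarith [hexp0]
    have hq_pow_pos : (0:ℝ) < (q:ℝ) ^ n := by positivity
    calc Real.exp (-4) / 2 * (q:ℝ) ^ n / max 1 (Real.log n)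
        = (Real.exp (-4) / 2 / max 1 (Real.log n)) * (q:ℝ) ^ n := by ring
      _ ≤ (Real.exp (-4) / max 1 (m:ℝ)) * (q:ℝ) ^ n := by
          apply mul_le_mul_of_nonneg_right hchain1 (by positivity)
      _ ≤ (∏ P ∈ (normalizedFactors f).toFinset,
            (1 - ((q:ℝ) ^ P.natDegree)⁻¹)) * (q:ℝ) ^ n := by
          apply mul_le_mul_of_nonneg_right hana (by positivity)
      _ = (q:ℝ) ^ n * ∏ P ∈ (normalizedFactors f).toFinset,
            (1 - ((q:ℝ) ^ P.natDegree)⁻¹) := by ring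
      _ ≤ (phiP Fq f : ℝ) := key
end
end
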